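/- arXiv:1609.06853 — 10 statements merged into one kernel-verified Lean document; each statement's English description precedes it below -/
import Mathlib

section
/- For every n ≥ 2, the Černý automaton C_n is synchronizing: the word w = b(a^{n-1}b)^{n-2} of length (n-1)^2 satisfies qw = 2 for every state q in {1,...,n}. -/
/-- Apply a word (list of transition functions) to a state, left to right. -/
def applyWord {α : Type*} (w : List (α → α)) (q : α) : α :=
  w.foldl (fun s f => f s) q

/-- The `a`-transition of the Černý automaton on `Fin n` (state `i+1` is index `i`). -/
def cernyA (n : ℕ) [NeZero n] : Fin n → Fin n := fun q => q + 1

/-- The `b`-transition of the Černý automaton: state 1 ↦ 2, others fixed. -/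
def cernyB (n : ℕ) [NeZero n] : Fin n → Fin n := fun q => if q = 0 then 1 else q

/-!
The first letter `b` moves every state into `{2, …, n}`. On that set the block
`a^{n-1} b` acts as `q ↦ max (q - 1) 2`: `a^{n-1}` is rotation by one step backwards, which
only leaves the set when it sends `2` to `1`, and `b` then returns it to `2`. Hence `n - 2` blocks
collapse `{2, …, n}` to `2`.
-/

section applyWord

variable {α : Type*}

lemma applyWord_cons (f : α → α) (w : List (α → α)) (q : α) :
    applyWord (f :: w) q = applyWord w (f q) := rfl

lemma applyWord_append (u v : List (α → α)) (q : α) :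
    applyWord (u ++ v) q = applyWord v (applyWord u q) :=
  List.foldl_append

lemma applyWord_replicate (m : ℕ) (f : α → α) (q : α) :
    applyWord (List.replicate m f) q = f^[m] q := by
  induction m generalizing q with
  | zero => rfl
  | succ m ih => rw [List.replicate_succ, applyWord_cons, ih, Function.iterate_succ_apply]

lemma applyWord_flatten_replicate (k : ℕ) (u : List (α → α)) (q : α) :
    applyWord (List.replicate k u).flatten q = (applyWord u)^[k] q := by
  induction k generalizing q with
  | zero => rfl
  | succ k ih =>
    rw [List.replicate_succ, List.flatten_cons, applyWord_append, ih, Function.iterate_succ_apply]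

end applyWord

def cernyBlock (n : ℕ) [NeZero n] : List (Fin n → Fin n) :=
  List.replicate (n - 1) (cernyA n) ++ [cernyB n]

section Cerny

variable {n : ℕ} [NeZero n]

lemma val_cernyA_iterate (m : ℕ) (q : Fin n) : ((cernyA n)^[m] q).val = (q.val + m) % n := by
  induction m with
  | zero => exact (Nat.mod_eq_of_lt q.isLt).symm
  | succ m ih =>
    rw [Function.iterate_succ_apply', cernyA, Fin.val_add, ih, Fin.val_one', ← Nat.add_mod, add_assoc]

lemma val_cernyA_iterate_pred {q : Fin n} (hq : q ≠ 0) :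
    ((cernyA n)^[n - 1] q).val = q.val - 1 := by
  have hpos := Fin.pos_iff_ne_zero.mpr hq
  rw [val_cernyA_iterate, show q.val + (n - 1) = q.val - 1 + n by omega, Nat.add_mod_right,
    Nat.mod_eq_of_lt (by omega)]

lemma val_one_of_one_lt (hn : 1 < n) : (1 : Fin n).val = 1 := by
  rw [Fin.val_one', Nat.mod_eq_of_lt hn]

lemma cernyB_ne_zero (hn : 1 < n) (q : Fin n) : cernyB n q ≠ 0 := by
  unfold cernyB
  split_ifs with hq
  · rw [Fin.ne_iff_vne, val_one_of_one_lt hn, Fin.val_zero]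
    exact one_ne_zero
  · exact hq

lemma val_applyWord_cernyBlock {q : Fin n} (hq : q ≠ 0) :
    (applyWord (cernyBlock n) q).val = max (q.val - 1) 1 := by
  rw [cernyBlock, applyWord_append, applyWord_replicate]
  show (cernyB n _).val = _
  have hpred := val_cernyA_iterate_pred hq
  have hpos := Fin.pos_iff_ne_zero.mpr hq
  unfold cernyB
  split_ifs with h
  · have := q.isLt
    rw [h, Fin.val_zero] at hpred
    rw [val_one_of_one_lt (by omega)]
    omega
  · have := Fin.val_ne_iff.mpr h
    rw [Fin.val_zero] at this
    omega

lemma val_iterate_applyWord_cernyBlock (k : ℕ) {q : Fin n} (hq : q ≠ 0) :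
    ((applyWord (cernyBlock n))^[k] q).val = max (q.val - k) 1 := by
  induction k with
  | zero =>
    have := Fin.pos_iff_ne_zero.mpr hq
    rw [Function.iterate_zero_apply, Nat.sub_zero]
    omega
  | succ k ih =>
    rw [Function.iterate_succ_apply', val_applyWord_cernyBlock, ih]
    · omega
    · rw [Fin.ne_iff_vne, ih, Fin.val_zero]
      omega

end Cerny

/-- for n ≥ 2, the word b(a^{n-1}b)^{n-2} has length (n-1)^2 and sends
every state to state 2 (index 1), so the Černý automaton `C_n` is synchronizing. -/
theorem cerny_sync (n : ℕ) (hn : 2 ≤ n) [NeZero n] :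
    let w : List (Fin n → Fin n) :=
      cernyB n :: (List.replicate (n - 2) (List.replicate (n - 1) (cernyA n) ++ [cernyB n])).flatten
    w.length = (n - 1) ^ 2 ∧ ∀ q : Fin n, applyWord w q = (1 : Fin n) := by
  intro w
  refine ⟨?_, fun q => ?_⟩
  · obtain ⟨m, rfl⟩ : ∃ m, n = m + 2 := ⟨n - 2, by omega⟩
    simp only [w, List.length_cons, List.length_flatten, List.map_replicate, List.length_append,
      List.length_replicate, List.length_nil, List.sum_replicate, smul_eq_mul,
      Nat.add_sub_cancel, Nat.add_one_sub_one]
    ring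
  · have hb := cernyB_ne_zero hn q
    have hlt := (cernyB n q).isLt
    show applyWord (cernyB n :: (List.replicate (n - 2) (cernyBlock n)).flatten) q = 1
    rw [applyWord_cons, applyWord_flatten_replicate, Fin.ext_iff,
      val_iterate_applyWord_cernyBlock _ hb, val_one_of_one_lt hn]
    omega
end

section
/- For n ≥ 2, 0 ≤ m ≤ n-2 and 1 ≤ k ≤ (n-m)^{n-m} - 1, the inequality d(n, (k+1)·n^m - 1) ≥ d(n-m, k) holds. -/
/-- `w` is a synchronizing word for the DFA with transition function `δ`. -/
def IsSyncWord {n k : ℕ} (δ : Fin k → Fin n → Fin n) (w : List (Fin k)) : Prop :=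
  ∃ qs : Fin n, ∀ q : Fin n, w.foldl (fun s x => δ x s) q = qs

/-- The DFA is basic: distinct symbols act differently and no symbol is the identity. -/
def IsBasic {n k : ℕ} (δ : Fin k → Fin n → Fin n) : Prop :=
  Function.Injective δ ∧ ∀ x : Fin k, δ x ≠ id

/-- Length of a shortest synchronizing word of the DFA `δ`. -/
noncomputable def shortestSync {n k : ℕ} (δ : Fin k → Fin n → Fin n) : ℕ :=
  sInf {L | ∃ w : List (Fin k), IsSyncWord δ w ∧ w.length = L}

/-- `d(n,k)`: the maximal shortest synchronizing word length over all synchronizing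
basic DFAs with `n` states and `k` symbols. -/
noncomputable def dBound (n k : ℕ) : ℕ :=
  sSup {L | ∃ δ : Fin k → Fin n → Fin n,
    IsBasic δ ∧ (∃ w, IsSyncWord δ w) ∧ shortestSync δ = L}

namespace DBX

variable {c m k : ℕ}

/-- Letter alphabet before removing the identity letter. -/
abbrev A (c m k : ℕ) := Fin (k + 1) × (Fin m → Fin (c + m))

def p0 (c m k : ℕ) : A c m k := (0, fun i => Fin.natAdd c i)

def coreAct (δ : Fin k → Fin c → Fin c) : Fin (k + 1) → Fin c → Fin c :=
  Fin.cases id δ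

@[simp] lemma coreAct_zero (δ : Fin k → Fin c → Fin c) : coreAct δ 0 = id := rfl

@[simp] lemma coreAct_succ (δ : Fin k → Fin c → Fin c) (a : Fin k) :
    coreAct δ a.succ = δ a := by
  simp [coreAct]

def bigAct (δ : Fin k → Fin c → Fin c) (p : A c m k) : Fin (c + m) → Fin (c + m) :=
  fun q =>
    if h : q.val < c then Fin.castAdd m (coreAct δ p.1 ⟨q.val, h⟩)
    else p.2 ⟨q.val - c, by have := q.isLt; omega⟩

lemma bigAct_cast (δ : Fin k → Fin c → Fin c) (p : A c m k) (q : Fin c) :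
    bigAct δ p (Fin.castAdd m q) = Fin.castAdd m (coreAct δ p.1 q) := by
  have hq : (Fin.castAdd m q).val < c := q.isLt
  simp only [bigAct, dif_pos hq]
  rfl

lemma bigAct_natAdd (δ : Fin k → Fin c → Fin c) (p : A c m k) (i : Fin m) :
    bigAct δ p (Fin.natAdd c i) = p.2 i := by
  have hq : ¬ (Fin.natAdd c i).val < c := by simp [Fin.natAdd]
  simp only [bigAct, dif_neg hq]
  congr 1
  apply Fin.ext
  simp [Fin.natAdd]

lemma castAdd_inj : Function.Injective (Fin.castAdd m : Fin c → Fin (c + m)) := by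
  intro a b h
  simpa [Fin.ext_iff] using h

lemma coreAct_inj (δ : Fin k → Fin c → Fin c) (h1 : Function.Injective δ)
    (h2 : ∀ x, δ x ≠ id) : Function.Injective (coreAct δ) := by
  intro a b hab
  induction a using Fin.cases with
  | zero =>
    induction b using Fin.cases with
    | zero => rfl
    | succ b => simp at hab; exact absurd hab.symm (h2 b)
  | succ a =>
    induction b using Fin.cases with
    | zero => simp at hab; exact absurd hab (h2 a)
    | succ b => simp at hab; exact congrArg Fin.succ (h1 hab)

lemma bigAct_inj (δ : Fin k → Fin c → Fin c) (h1 : Function.Injective δ)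
    (h2 : ∀ x, δ x ≠ id) : Function.Injective (bigAct δ (m := m)) := by
  intro p p' hpp
  have hcore : p.1 = p'.1 := by
    apply coreAct_inj δ h1 h2
    funext q
    apply castAdd_inj
    rw [← bigAct_cast δ p q, ← bigAct_cast δ p' q, hpp]
  have hext : p.2 = p'.2 := by
    funext i
    rw [← bigAct_natAdd δ p i, ← bigAct_natAdd δ p' i, hpp]
  exact Prod.ext hcore hext


lemma bigAct_ne_id (δ : Fin k → Fin c → Fin c) (h2 : ∀ x, δ x ≠ id)
    (p : A c m k) (hp : p ≠ p0 c m k) : bigAct δ p ≠ id := by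
  intro hid
  rcases Fin.eq_zero_or_eq_succ p.1 with h0 | ⟨a, ha⟩
  · have hne : p.2 ≠ fun i => Fin.natAdd c i := by
      intro h2'
      exact hp (Prod.ext h0 h2')
    obtain ⟨i, hi⟩ := Function.ne_iff.mp hne
    apply hi
    have := congrFun hid (Fin.natAdd c i)
    rwa [bigAct_natAdd] at this
  · obtain ⟨q, hq⟩ := Function.ne_iff.mp (h2 a)
    apply hq
    have := congrFun hid (Fin.castAdd m q)
    rw [bigAct_cast, ha, coreAct_succ] at this
    exact castAdd_inj this

variable {K : ℕ}

def proj (E : Fin K → A c m k) (w : List (Fin K)) : List (Fin k) :=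
  w.filterMap fun x => Fin.cases none some (E x).1

lemma proj_length_le (E : Fin K → A c m k) (w : List (Fin K)) :
    (proj E w).length ≤ w.length :=
  List.length_filterMap_le _ _

lemma foldl_cast (δ : Fin k → Fin c → Fin c) (E : Fin K → A c m k) :
    ∀ (w : List (Fin K)) (q : Fin c),
      w.foldl (fun s x => bigAct δ (E x) s) (Fin.castAdd m q)
        = Fin.castAdd m ((proj E w).foldl (fun s x => δ x s) q) := by
  intro w
  induction w with
  | nil => intro q; simp [proj]
  | cons x t ih =>
    intro q
    rcases Fin.eq_zero_or_eq_succ (E x).1 with h0 | ⟨a, ha⟩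
    · have hstep : bigAct δ (E x) (Fin.castAdd m q) = Fin.castAdd m q := by
        rw [bigAct_cast, h0, coreAct_zero, id]
      have hproj : proj E (x :: t) = proj E t := by
        simp [proj, List.filterMap_cons, h0]
      simp only [List.foldl_cons, hstep, hproj, ih]
    · have hstep : bigAct δ (E x) (Fin.castAdd m q) = Fin.castAdd m (δ a q) := by
        rw [bigAct_cast, ha, coreAct_succ]
      have hproj : proj E (x :: t) = a :: proj E t := by
        simp [proj, List.filterMap_cons, ha]
      simp only [List.foldl_cons, hstep, hproj, ih]

lemma foldl_lift (δ : Fin k → Fin c → Fin c) (E : Fin K → A c m k)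
    (g : Fin k → Fin K) (z0 : Fin c)
    (hg : ∀ a, E (g a) = (a.succ, fun _ => Fin.castAdd m (δ a z0))) :
    ∀ (w : List (Fin k)) (q : Fin c),
      (w.map g).foldl (fun s x => bigAct δ (E x) s) (Fin.castAdd m q)
        = Fin.castAdd m (w.foldl (fun s x => δ x s) q) := by
  intro w
  induction w with
  | nil => intro q; simp
  | cons a t ih =>
    intro q
    have hstep : bigAct δ (E (g a)) (Fin.castAdd m q) = Fin.castAdd m (δ a q) := by
      rw [bigAct_cast, hg a, coreAct_succ]
    simp only [List.map_cons, List.foldl_cons, hstep, ih]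

lemma lift_sync (hc : 2 ≤ c) (δ : Fin k → Fin c → Fin c) (E : Fin K → A c m k)
    (g : Fin k → Fin K) (z0 : Fin c)
    (hg : ∀ a, E (g a) = (a.succ, fun _ => Fin.castAdd m (δ a z0)))
    (w : List (Fin k)) (hw : IsSyncWord δ w) :
    IsSyncWord (fun x => bigAct δ (E x)) (w.map g) := by
  obtain ⟨qs, hqs⟩ := hw
  refine ⟨Fin.castAdd m qs, fun q => ?_⟩
  by_cases hq : q.val < c
  · have hq' : q = Fin.castAdd m ⟨q.val, hq⟩ := by
      apply Fin.ext; rfl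
    rw [hq', foldl_lift δ E g z0 hg, hqs]
  · cases w with
    | nil =>
      exfalso
      have h0 := hqs ⟨0, by omega⟩
      have h1 := hqs ⟨1, by omega⟩
      simp only [List.foldl_nil] at h0 h1
      rw [← h1] at h0
      exact absurd (congrArg Fin.val h0) (by simp)
    | cons a t =>
      have hstep : bigAct δ (E (g a)) q = Fin.castAdd m (δ a z0) := by
        rw [bigAct, dif_neg hq, hg a]
      simp only [List.map_cons, List.foldl_cons, hstep, foldl_lift δ E g z0 hg]
      have := hqs z0
      simp only [List.foldl_cons] at this
      rw [this]

theorem key (m : ℕ) (hc : 2 ≤ c) (δ : Fin k → Fin c → Fin c) (hb : IsBasic δ)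
    (hs : ∃ w, IsSyncWord δ w) :
    ∃ δ' : Fin ((k + 1) * (c + m) ^ m - 1) → Fin (c + m) → Fin (c + m),
      IsBasic δ' ∧ (∃ w, IsSyncWord δ' w) ∧ shortestSync δ ≤ shortestSync δ' := by
  classical
  have hcard : Fintype.card {p : A c m k // p ≠ p0 c m k}
      = (k + 1) * (c + m) ^ m - 1 := by
    have h1 : Fintype.card {p : A c m k // ¬ p = p0 c m k}
        = Fintype.card (A c m k) - Fintype.card {p : A c m k // p = p0 c m k} :=
      Fintype.card_subtype_compl _
    have h2 : Fintype.card {p : A c m k // p = p0 c m k} = 1 :=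
      Fintype.card_subtype_eq _
    have h3 : Fintype.card (A c m k) = (k + 1) * (c + m) ^ m := by
      simp [A, Fintype.card_fun]
    simp only [h2, h3] at h1
    exact h1
  let e : Fin ((k + 1) * (c + m) ^ m - 1) ≃ {p : A c m k // p ≠ p0 c m k} :=
    (Fintype.equivFinOfCardEq hcard).symm
  let E : Fin ((k + 1) * (c + m) ^ m - 1) → A c m k := fun x => (e x).val
  refine ⟨fun x => bigAct δ (E x), ⟨?_, ?_⟩, ?_, ?_⟩
  · intro x y hxy
    exact e.injective (Subtype.ext (bigAct_inj δ hb.1 hb.2 hxy))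
  · intro x
    exact bigAct_ne_id δ hb.2 (E x) (e x).prop
  · obtain ⟨w, hw⟩ := hs
    set z0 : Fin c := ⟨0, by omega⟩
    have hne : ∀ a : Fin k,
        ((a.succ, fun _ => Fin.castAdd m (δ a z0)) : A c m k) ≠ p0 c m k := by
      intro a h
      exact Fin.succ_ne_zero a (congrArg Prod.fst h)
    set g : Fin k → Fin ((k + 1) * (c + m) ^ m - 1) := fun a =>
      e.symm ⟨(a.succ, fun _ => Fin.castAdd m (δ a z0)), hne a⟩
    have hg : ∀ a, E (g a) = (a.succ, fun _ => Fin.castAdd m (δ a z0)) := by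
      intro a
      simp only [E, g, Equiv.apply_symm_apply]
    exact ⟨w.map g, lift_sync hc δ E g z0 hg w hw⟩
  · set δ' := fun x => bigAct δ (E x) with hδ'
    have hsync' : ∃ w', IsSyncWord δ' w' := by
      obtain ⟨w, hw⟩ := hs
      set z0 : Fin c := ⟨0, by omega⟩
      have hne : ∀ a : Fin k,
          ((a.succ, fun _ => Fin.castAdd m (δ a z0)) : A c m k) ≠ p0 c m k := by
        intro a h
        exact Fin.succ_ne_zero a (congrArg Prod.fst h)
      set g : Fin k → Fin ((k + 1) * (c + m) ^ m - 1) := fun a =>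
        e.symm ⟨(a.succ, fun _ => Fin.castAdd m (δ a z0)), hne a⟩
      have hg : ∀ a, E (g a) = (a.succ, fun _ => Fin.castAdd m (δ a z0)) := by
        intro a
        simp only [E, g, Equiv.apply_symm_apply]
      exact ⟨w.map g, lift_sync hc δ E g z0 hg w hw⟩
    have hne' : {L | ∃ w' : List (Fin ((k + 1) * (c + m) ^ m - 1)),
        IsSyncWord δ' w' ∧ w'.length = L}.Nonempty := by
      obtain ⟨w', hw'⟩ := hsync'
      exact ⟨w'.length, w', hw', rfl⟩
    have hmem := Nat.sInf_mem hne'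
    obtain ⟨w', hw', hlen⟩ := hmem
    obtain ⟨qs', hqs'⟩ := hw'
    -- project w' down
    have hps : IsSyncWord δ (proj E w') := by
      refine ⟨(proj E w').foldl (fun s x => δ x s) ⟨0, by omega⟩, fun q => ?_⟩
      apply castAdd_inj
      rw [← foldl_cast δ E w' q, ← foldl_cast δ E w' ⟨0, by omega⟩]
      rw [hqs' (Fin.castAdd m q), hqs' (Fin.castAdd m ⟨0, by omega⟩)]
    calc shortestSync δ ≤ (proj E w').length := Nat.sInf_le ⟨proj E w', hps, rfl⟩
      _ ≤ w'.length := proj_length_le E w'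
      _ = shortestSync δ' := hlen

end DBX

/-- for n ≥ 2, 0 ≤ m ≤ n-2 and 1 ≤ k ≤ (n-m)^{n-m} - 1,
`d(n, (k+1)·n^m - 1) ≥ d(n-m, k)`. -/
theorem dBound_extension (n m k : ℕ) (hn : 2 ≤ n) (hm : m ≤ n - 2)
    (hk1 : 1 ≤ k) (hk2 : k ≤ (n - m) ^ (n - m) - 1) :
    dBound (n - m) k ≤ dBound n ((k + 1) * n ^ m - 1) := by
  set c := n - m with hcdef
  have hc2 : 2 ≤ c := by omega
  have hn' : n = c + m := by omega
  rw [hn']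
  unfold dBound
  apply csSup_le'
  rintro L ⟨δ, hb, hs, rfl⟩
  obtain ⟨δ', hb', hs', hle⟩ := DBX.key m hc2 δ hb hs
  have hbdd : BddAbove {L | ∃ δ'' : Fin ((k + 1) * (c + m) ^ m - 1) → Fin (c + m) → Fin (c + m),
      IsBasic δ'' ∧ (∃ w, IsSyncWord δ'' w) ∧ shortestSync δ'' = L} := by
    apply Set.Finite.bddAbove
    apply Set.Finite.subset (Set.finite_range
      (shortestSync (n := c + m) (k := (k + 1) * (c + m) ^ m - 1)))
    rintro L ⟨δ'', _, _, h⟩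
    exact ⟨δ'', h⟩
  exact hle.trans (le_csSup hbdd ⟨δ', hb', hs', rfl⟩)
end

section
/- For n ≥ 3, there exists a synchronizing basic DFA on n states with 5 symbols whose shortest synchronizing word has length exactly n^2 - 3n + 2; hence d(n,5) ≥ n^2 - 3n + 2. -/
/- The symbols of the automaton `A`, on `Fin n` (state `i+1` of `{1,...,n}` is index `i`,
and `n+1` is interpreted as `1`, i.e. addition is cyclic). -/
def mapA (n : ℕ) [NeZero n] : Fin n → Fin n := fun q => q + 1
def mapB (n : ℕ) [NeZero n] : Fin n → Fin n := fun q =>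
  if q = 0 then 0 else if q = 1 then 2 else if q = 2 then 2 else q
def mapC (n : ℕ) [NeZero n] : Fin n → Fin n := fun q =>
  if q = 0 then 2 else if q = 1 then 2 else q + 1
def mapD (n : ℕ) [NeZero n] : Fin n → Fin n := fun q =>
  if q = 0 then 1 else if q = 1 then 3 else if q = 2 then 3 else q + 1
def mapE (n : ℕ) [NeZero n] : Fin n → Fin n := fun q =>
  if q = 0 then 2 else if q = 1 then 3 else if q = 2 then 3 else q + 1

/-- The DFA `A` with the five symbols `a, b, c, d, e`. -/
def deltaA (n : ℕ) [NeZero n] : Fin 5 → Fin n → Fin n :=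
  ![mapA n, mapB n, mapC n, mapD n, mapE n]

/-!
Every letter `x` moves a state `q` cyclically forward by `baseShift x + extraShift x q`, where
`baseShift x ≤ 1` and `extraShift x q ∈ {0, 1}`.

Lower bound: if `w` synchronizes to `f`, the run from `f + 1 - Σ baseShift` makes a number
`E ≡ -1 (mod n)` of extra steps, so `E ≥ n - 1`. Along a transition the potential `distToOne`
(the cyclic distance to state `1`) drops by at most the base shift, and an extra step makes it rise
by `n - 1` more. Since the potential lies in `[0, n - 1]`, this gives `(n - 1) E ≤ |w| + n - 1`,
hence `|w| ≥ (n - 1) (n - 2)`.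

Upper bound: `d a^(n-2)` acts as `q ↦ q - 1` except that it fixes `1`, so `n - 3` such rounds take
every state into `{1, 2, 3}`, which `d a^(n-3) c` sends to `2`.
-/

open Fin.NatCast Fin.CommRing

section Runs

variable {ι α : Type*} (δ : ι → α → α)

def runSum (f : ι → α → ℕ) : List ι → α → ℕ
  | [], _ => 0
  | x :: w, q => f x q + runSum f w (δ x q)

theorem runSum_add (f g : ι → α → ℕ) (w : List ι) (q : α) :
    runSum δ (fun x q => f x q + g x q) w q = runSum δ f w q + runSum δ g w q := by
  induction w generalizing q with
  | nil => rfl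
  | cons x w ih => simp only [runSum, ih]; ring

theorem runSum_const (c : ι → ℕ) (w : List ι) (q : α) :
    runSum δ (fun x _ => c x) w q = (w.map c).sum := by
  induction w generalizing q with
  | nil => rfl
  | cons x w ih => simp only [runSum, ih, List.map_cons, List.sum_cons]

theorem foldl_eq_add_runSum [AddMonoidWithOne α] (s : ι → α → ℕ)
    (hs : ∀ x q, δ x q = q + s x q) (w : List ι) (q : α) :
    w.foldl (fun q x => δ x q) q = q + runSum δ s w q := by
  induction w generalizing q with
  | nil => simp [runSum]
  | cons x w ih => rw [List.foldl_cons, ih, runSum, Nat.cast_add, ← add_assoc, ← hs]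

theorem add_mul_runSum_le (φ : α → ℕ) (m : ℕ) (g : ι → α → ℕ) (c : ι → ℕ)
    (h : ∀ x q, φ q + m * g x q ≤ c x + φ (δ x q)) (w : List ι) (q : α) :
    φ q + m * runSum δ g w q ≤ (w.map c).sum + φ (w.foldl (fun q x => δ x q) q) := by
  induction w generalizing q with
  | nil => simp [runSum]
  | cons x w ih =>
    have := ih (δ x q)
    have := h x q
    simp only [runSum, List.foldl_cons, List.map_cons, List.sum_cons, mul_add]
    omega

end Runs

section SyncBounds

variable {n k : ℕ}

theorem shortestSync_eq_length {δ : Fin k → Fin n → Fin n} {w : List (Fin k)}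
    (hw : IsSyncWord δ w) (hmin : ∀ v, IsSyncWord δ v → w.length ≤ v.length) :
    shortestSync δ = w.length :=
  le_antisymm (Nat.sInf_le ⟨w, hw, rfl⟩)
    (le_csInf ⟨_, w, hw, rfl⟩ (by rintro _ ⟨v, hv, rfl⟩; exact hmin v hv))

theorem shortestSync_le_dBound {δ : Fin k → Fin n → Fin n} (hδ : IsBasic δ)
    (hsync : ∃ w, IsSyncWord δ w) : shortestSync δ ≤ dBound n k := by
  refine le_csSup (Set.Finite.bddAbove ?_) ⟨δ, hδ, hsync, rfl⟩
  refine (Set.finite_range (shortestSync (n := n) (k := k))).subset ?_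
  rintro _ ⟨δ', -, -, rfl⟩
  exact ⟨δ', rfl⟩

end SyncBounds

namespace Fin

variable {n : ℕ} [NeZero n]

theorem natCast_inj_of_lt {a b : ℕ} (ha : a < n) (hb : b < n) : (a : Fin n) = b ↔ a = b :=
  ⟨fun h => by simpa [Nat.mod_eq_of_lt ha, Nat.mod_eq_of_lt hb] using congrArg Fin.val h,
    congrArg _⟩

theorem val_neg_natCast {k : ℕ} (hk : 0 < k) (hkn : k ≤ n) : (-(k : Fin n)).val = n - k := by
  rw [← Fin.val_cast_of_lt (n := n) (a := n - k) (by omega), Nat.cast_sub hkn, Fin.natCast_self,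
    zero_sub]

theorem zero_ne_one_of_two_le (hn : 2 ≤ n) : (0 : Fin n) ≠ 1 := by
  simp [Fin.ext_iff, Nat.mod_eq_of_lt (by omega : 1 < n)]

theorem zero_ne_two_of_three_le (hn : 3 ≤ n) : (0 : Fin n) ≠ 2 := by
  simp [Fin.ext_iff, Nat.mod_eq_of_lt (by omega : 2 < n)]

theorem one_ne_two_of_three_le (hn : 3 ≤ n) : (1 : Fin n) ≠ 2 := by
  simp [Fin.ext_iff, Nat.mod_eq_of_lt (by omega : 1 < n), Nat.mod_eq_of_lt (by omega : 2 < n)]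

theorem eq_one_or_two_or_three_of_val_sub_one_le_two {q : Fin n} (hq : (q - 1).val ≤ 2) :
    q = 1 ∨ q = 2 ∨ q = 3 := by
  have key : ∀ k : ℕ, (q - 1).val = k → q = 1 + k := fun k h =>
    sub_eq_iff_eq_add'.mp (Fin.ext (by rw [h, val_cast_of_lt (by omega)]))
  obtain h | h | h : (q - 1).val = 0 ∨ (q - 1).val = 1 ∨ (q - 1).val = 2 := by omega
  all_goals rw [key _ h]; norm_num

end Fin

def baseShift : Fin 5 → ℕ := ![1, 0, 1, 1, 1]

def extraShift {n : ℕ} [NeZero n] (x : Fin 5) (q : Fin n) : ℕ :=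
  ![0, if q = 1 then 1 else 0, if q = 0 then 1 else 0, if q = 1 then 1 else 0,
    if q = 0 ∨ q = 1 then 1 else 0] x

def distToOne {n : ℕ} [NeZero n] (q : Fin n) : ℕ := (1 - q).val

def roundWord (n : ℕ) : List (Fin 5) := 3 :: List.replicate (n - 2) 0

def finalWord (n : ℕ) : List (Fin 5) := 3 :: List.replicate (n - 3) 0 ++ [2]

def syncWord (n : ℕ) : List (Fin 5) :=
  (List.replicate (n - 3) (roundWord n)).flatten ++ finalWord n

theorem Nat.sq_sub_three_mul_add_two {n : ℕ} (hn : 3 ≤ n) :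
    n ^ 2 - 3 * n + 2 = (n - 1) * (n - 2) := by
  obtain ⟨m, rfl⟩ : ∃ m, n = m + 3 := ⟨n - 3, by omega⟩
  rw [show m + 3 - 1 = m + 2 by omega, show m + 3 - 2 = m + 1 by omega]
  ring_nf
  omega

theorem length_syncWord {n : ℕ} (hn : 3 ≤ n) : (syncWord n).length = (n - 1) * (n - 2) := by
  obtain ⟨m, rfl⟩ : ∃ m, n = m + 3 := ⟨n - 3, by omega⟩
  simp [syncWord, roundWord, finalWord, List.length_flatten]
  ring

section Automaton

variable {n : ℕ} [NeZero n]

theorem deltaA_eq_add_shift (hn : 3 ≤ n) (x : Fin 5) (q : Fin n) :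
    deltaA n x q = q + (baseShift x + extraShift x q : ℕ) := by
  have h01 := Fin.zero_ne_one_of_two_le (n := n) (by omega)
  have h02 := Fin.zero_ne_two_of_three_le hn
  have h12 := Fin.one_ne_two_of_three_le hn
  fin_cases x <;> simp [deltaA, baseShift, extraShift] <;>
    simp only [mapA, mapB, mapC, mapD, mapE] <;> split_ifs <;> subst_vars <;> simp_all <;> ring

theorem baseShift_add_extraShift_lt (hn : 3 ≤ n) (x : Fin 5) (q : Fin n) :
    baseShift x + extraShift x q < n := by
  fin_cases x <;> simp [baseShift, extraShift] <;> (try split_ifs) <;> omega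

theorem deltaA_eq_add_natCast_iff (hn : 3 ≤ n) (x : Fin 5) (q : Fin n) {s : ℕ} (hs : s < n) :
    deltaA n x q = q + s ↔ baseShift x + extraShift x q = s := by
  rw [deltaA_eq_add_shift hn, add_right_inj,
    Fin.natCast_inj_of_lt (baseShift_add_extraShift_lt hn x q) hs]

theorem isBasic_deltaA (hn : 3 ≤ n) : IsBasic (deltaA n) := by
  have h01 := Fin.zero_ne_one_of_two_le (n := n) (by omega)
  -- the shifts at the states `0, 1` are `(1,1), (0,1), (2,1), (1,2), (2,2)` for `a, b, c, d, e`
  refine ⟨fun x y h => ?_, fun x h => ?_⟩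
  · have h0 := (deltaA_eq_add_natCast_iff hn x 0 (baseShift_add_extraShift_lt hn y 0)).mp
      (by rw [h, deltaA_eq_add_shift hn])
    have h1 := (deltaA_eq_add_natCast_iff hn x 1 (baseShift_add_extraShift_lt hn y 1)).mp
      (by rw [h, deltaA_eq_add_shift hn])
    fin_cases x <;> fin_cases y <;> simp_all [baseShift, extraShift]
  · have h1 := (deltaA_eq_add_natCast_iff hn x 1 (Nat.pos_of_neZero n)).mp (by simp [h])
    fin_cases x <;> simp_all [baseShift, extraShift]

theorem distToOne_one : distToOne (1 : Fin n) = 0 := by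
  simp [distToOne]

theorem distToOne_zero (hn : 2 ≤ n) : distToOne (0 : Fin n) = 1 := by
  simp [distToOne, Nat.mod_eq_of_lt hn]

theorem distToOne_two : distToOne (2 : Fin n) = n - 1 := by
  rw [distToOne, show (1 - 2 : Fin n) = -((1 : ℕ) : Fin n) by push_cast; ring,
    Fin.val_neg_natCast one_pos NeZero.one_le]

theorem distToOne_three (hn : 2 ≤ n) : distToOne (3 : Fin n) = n - 2 := by
  rw [distToOne, show (1 - 3 : Fin n) = -((2 : ℕ) : Fin n) by push_cast; ring,
    Fin.val_neg_natCast two_pos hn]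

theorem distToOne_le_succ (q : Fin n) : distToOne q ≤ 1 + distToOne (q + 1) := by
  rw [distToOne, distToOne, show 1 - q = 1 - (q + 1) + 1 by ring, Fin.val_add, Fin.val_one']
  have := Nat.mod_le 1 n
  have := Nat.mod_le ((1 - (q + 1)).val + 1 % n) n
  omega

theorem distToOne_add_le_step (hn : 3 ≤ n) (x : Fin 5) (q : Fin n) :
    distToOne q + (n - 1) * extraShift x q ≤ baseShift x + distToOne (deltaA n x q) := by
  have h01 := Fin.zero_ne_one_of_two_le (n := n) (by omega)
  have d0 := distToOne_zero (n := n) (by omega)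
  have d3 := distToOne_three (n := n) (by omega)
  rw [deltaA_eq_add_shift hn]
  by_cases h0 : q = 0
  · subst h0
    fin_cases x <;> norm_num [baseShift, extraShift, h01, d0, distToOne_two]
  by_cases h1 : q = 1
  · subst h1
    fin_cases x <;>
      norm_num [baseShift, extraShift, h01.symm, distToOne_one, distToOne_two, d3] <;> omega
  · fin_cases x <;> simp [baseShift, extraShift, h0, h1, distToOne_le_succ]

theorem length_ge_of_isSyncWord_deltaA (hn : 3 ≤ n) {w : List (Fin 5)}
    (hw : IsSyncWord (deltaA n) w) :
    (n - 1) * (n - 2) ≤ w.length := by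
  obtain ⟨f, hf⟩ := hw
  set B := (w.map baseShift).sum
  -- the start state whose run makes `-1 (mod n)` extra steps
  set q : Fin n := f + 1 - B
  set E := runSum (deltaA n) extraShift w q
  have hrun : f = q + ((B + E : ℕ) : Fin n) := by
    rw [← hf q, foldl_eq_add_runSum _ _ (deltaA_eq_add_shift hn), runSum_add, runSum_const]
  have hE : n - 1 ≤ E := by
    have h : ((E + 1 : ℕ) : Fin n) = 0 := by
      push_cast at hrun ⊢
      linear_combination -hrun
    have := Nat.le_of_dvd E.succ_pos (Fin.natCast_eq_zero.mp h)
    omega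
  have hpot : distToOne q + (n - 1) * E ≤ B + distToOne f := by
    have := add_mul_runSum_le (deltaA n) distToOne (n - 1) extraShift baseShift
      (distToOne_add_le_step hn) w q
    rwa [hf q] at this
  have hB : B ≤ w.length := by
    simpa using List.sum_le_card_nsmul (w.map baseShift) 1 (by
      simp only [List.mem_map]
      rintro _ ⟨x, -, rfl⟩
      fin_cases x <;> simp [baseShift])
  have hfin : distToOne f ≤ n - 1 := Nat.le_pred_of_lt (1 - f).is_lt
  have key : (n - 1) * (n - 1) ≤ w.length + (n - 1) := calc
    (n - 1) * (n - 1) ≤ (n - 1) * E := Nat.mul_le_mul_left _ hE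
    _ ≤ B + distToOne f := by omega
    _ ≤ w.length + (n - 1) := by omega
  have : (n - 1) * (n - 1) = (n - 1) * (n - 2) + (n - 1) := by
    rw [← Nat.mul_succ]; congr 2; omega
  omega

theorem foldl_replicate_zero (k : ℕ) (q : Fin n) :
    (List.replicate k 0).foldl (fun s x => deltaA n x s) q = q + k := by
  induction k generalizing q with
  | zero => simp
  | succ k ih =>
    rw [List.replicate_succ, List.foldl_cons, ih]
    simp [deltaA, mapA]
    ring

theorem foldl_roundWord (hn : 3 ≤ n) (q : Fin n) :
    (roundWord n).foldl (fun s x => deltaA n x s) q = if q = 1 then 1 else q - 1 := by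
  have hcast : ((n - 2 : ℕ) : Fin n) = -2 := by simp [Nat.cast_sub (by omega : 2 ≤ n)]
  rw [roundWord, List.foldl_cons, foldl_replicate_zero, hcast, deltaA_eq_add_shift hn]
  split_ifs with h
  · subst h
    simp [baseShift, extraShift]
  · simp [baseShift, extraShift, h]
    ring

theorem val_sub_one_foldl_roundWord (hn : 3 ≤ n) (q : Fin n) :
    ((roundWord n).foldl (fun s x => deltaA n x s) q - 1).val = (q - 1).val - 1 := by
  rw [foldl_roundWord hn]
  split_ifs with h
  · simp [h]
  · rw [Fin.val_sub_one_of_ne_zero (sub_ne_zero.mpr h)]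

theorem val_sub_one_foldl_rounds (hn : 3 ≤ n) (k : ℕ) (q : Fin n) :
    ((List.replicate k (roundWord n)).flatten.foldl (fun s x => deltaA n x s) q - 1).val =
      (q - 1).val - k := by
  induction k generalizing q with
  | zero => simp
  | succ k ih =>
    rw [List.replicate_succ, List.flatten_cons, List.foldl_append, ih,
      val_sub_one_foldl_roundWord hn]
    omega

theorem foldl_finalWord (hn : 3 ≤ n) {q : Fin n} (hq : q = 1 ∨ q = 2 ∨ q = 3) :
    (finalWord n).foldl (fun s x => deltaA n x s) q = 2 := by
  have hcast : ((n - 3 : ℕ) : Fin n) = -3 := by simp [Nat.cast_sub hn]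
  have h01 := Fin.zero_ne_one_of_two_le (n := n) (by omega)
  have h31 : (3 : Fin n) ≠ 1 := fun h => Fin.zero_ne_two_of_three_le hn (by linear_combination -h)
  have h21 := (Fin.one_ne_two_of_three_le hn).symm
  simp only [finalWord, List.foldl_cons, List.foldl_append, foldl_replicate_zero, hcast,
    List.foldl_nil, deltaA_eq_add_shift hn 3]
  rcases hq with rfl | rfl | rfl <;> simp [baseShift, extraShift, h21, h31] <;>
    norm_num <;> simp [deltaA, mapC, h01.symm]

theorem isSyncWord_syncWord (hn : 3 ≤ n) : IsSyncWord (deltaA n) (syncWord n) := by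
  refine ⟨2, fun q => ?_⟩
  rw [syncWord, List.foldl_append]
  refine foldl_finalWord hn (Fin.eq_one_or_two_or_three_of_val_sub_one_le_two ?_)
  rw [val_sub_one_foldl_rounds hn]
  have := (q - 1).is_lt
  omega

end Automaton

/-- for n ≥ 3, the DFA `A` is a synchronizing basic DFA on `n` states with
5 symbols whose shortest synchronizing word has length exactly `n² - 3n + 2`;
hence `d(n,5) ≥ n² - 3n + 2`. -/
theorem dBound_five (n : ℕ) (hn : 3 ≤ n) [NeZero n] :
    IsBasic (deltaA n) ∧ (∃ w, IsSyncWord (deltaA n) w) ∧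
    shortestSync (deltaA n) = n ^ 2 - 3 * n + 2 ∧
    n ^ 2 - 3 * n + 2 ≤ dBound n 5 := by
  have hbasic := isBasic_deltaA hn
  have hsync := isSyncWord_syncWord hn
  have hshortest : shortestSync (deltaA n) = n ^ 2 - 3 * n + 2 := by
    rw [Nat.sq_sub_three_mul_add_two hn, ← length_syncWord hn]
    refine shortestSync_eq_length hsync fun w hw => ?_
    rw [length_syncWord hn]
    exact length_ge_of_isSyncWord_deltaA hn hw
  exact ⟨hbasic, ⟨_, hsync⟩, hshortest,
    hshortest ▸ shortestSync_le_dBound hbasic ⟨_, hsync⟩⟩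
end

section
/- For n ≥ 3, the DFA A^{-d} obtained from the automaton A by removing symbol d (keeping symbols a,b,c,e) has shortest synchronizing word length exactly n^2 - 3n + 3; in particular the word b(a^{n-2}c)^{n-2} of length n^2 - 3n + 3 is synchronizing for A^{-d}. -/
/-- The DFA `A^{-d}` with the four symbols `a, b, c, e`. -/
def deltaAd (n : ℕ) [NeZero n] : Fin 4 → Fin n → Fin n :=
  ![mapA n, mapB n, mapC n, mapE n]

/-!
Write `arc s k` for the cyclic arc `s, s + 1, …, s + k` of states (indexed from `0`).

Upper bound: `b` sends every state into `arc 2 (n - 2)`, and each round `a^{n-2} c` turns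
`arc 2 (k + 1)` into `arc 2 k`: `a^{n-2}` rotates it to start at `0`, then `c` merges `0` and `1`.

Lower bound: read a synchronizing word backwards, following arcs of length `< n` that contain the
image of the whole state set. The preimage of `arc s k` under a letter lies in the rotated arc
`arc (s - 1) k`, except when `s = 2` (or `s = 3` for `e`), where it lies in an arc one longer
starting at `0` or `1`. So the arc can only grow after its start has gone once around the
cycle, and the cost `(n - 1) (n - 2 - k) + (s - 2 mod n)` drops by at most one per letter until it
reaches `0` at `arc 2 (n - 2)`. A singleton costs at least `(n - 1) (n - 2)`, and the full state
set is no such arc, so every synchronizing word is longer than `(n - 1) (n - 2)`.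
-/

theorem lt_length_of_forall_foldl_mem {α σ ι : Type*} (δ : σ → α → α) (A : ι → Set α)
    (c : ι → ℕ) (hA : ∀ i, A i ≠ Set.univ)
    (hstep : ∀ x i, c i = 0 ∨ ∃ j, δ x ⁻¹' A i ⊆ A j ∧ c i ≤ c j + 1) (w : List σ) (i : ι)
    (hw : ∀ q, w.foldl (fun s x => δ x s) q ∈ A i) : c i < w.length := by
  induction w using List.reverseRecOn generalizing i with
  | nil => exact absurd (Set.eq_univ_of_forall hw) (hA i)
  | append_singleton u x ih =>
    simp only [List.foldl_append, List.foldl_cons, List.foldl_nil] at hw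
    rw [List.length_append, List.length_singleton]
    rcases hstep x i with hzero | ⟨j, hsub, hcost⟩
    · omega
    · have := ih j fun q => hsub (hw q)
      omega

theorem sq_sub_three_mul_add_three {n : ℕ} (hn : 3 ≤ n) :
    n ^ 2 - 3 * n + 3 = (n - 1) * (n - 2) + 1 := by
  obtain ⟨m, rfl⟩ : ∃ m, n = m + 3 := ⟨n - 3, by omega⟩
  simp only [show m + 3 - 1 = m + 2 by omega, show m + 3 - 2 = m + 1 by omega]
  ring_nf
  omega

namespace Fin

variable {n : ℕ} [NeZero n]

theorem val_ofNat_of_lt {k : ℕ} [k.AtLeastTwo] (h : ofNat(k) < n) :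
    ((ofNat(k) : Fin n) : ℕ) = ofNat(k) :=
  Nat.mod_eq_of_lt h

theorem val_one_of_lt (h : 1 < n) : ((1 : Fin n) : ℕ) = 1 :=
  Nat.mod_eq_of_lt h

theorem val_add_one_eq_ite (q : Fin n) :
    ((q + 1 : Fin n) : ℕ) = if (q : ℕ) + 1 = n then 0 else (q : ℕ) + 1 := by
  have := q.isLt
  rcases Nat.lt_or_ge 1 n with h | h
  · rw [Fin.val_add_eq_ite, val_one_of_lt h]
    split_ifs <;> omega
  · obtain rfl : n = 1 := by have := NeZero.ne n; omega
    simp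

omit [NeZero n] in
theorem val_sub_eq_ite (a b : Fin n) :
    ((a - b : Fin n) : ℕ) = if (b : ℕ) ≤ a then (a : ℕ) - b else n + a - b := by
  split_ifs with h
  · exact Fin.coe_sub_iff_le.2 h
  · exact Fin.coe_sub_iff_lt.2 (by omega)

end Fin

namespace Aminusd

variable {n : ℕ} [NeZero n]

theorem val_three (hn : 3 ≤ n) : ((3 : Fin n) : ℕ) = if n = 3 then 0 else 3 := by
  split_ifs with h
  · subst h; rfl
  · exact Fin.val_ofNat_of_lt (by omega)

theorem mapB_val (hn : 3 ≤ n) (q : Fin n) :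
    (mapB n q : ℕ) = if (q : ℕ) = 1 then 2 else (q : ℕ) := by
  have h1 := Fin.val_one_of_lt (show 1 < n by omega)
  have h2 := Fin.val_ofNat_of_lt (show 2 < n by omega)
  simp only [mapB, Fin.ext_iff, Fin.val_zero, h1, h2]
  split_ifs <;> simp only [Fin.val_zero, h2] <;> omega

theorem mapC_val (hn : 3 ≤ n) (q : Fin n) :
    (mapC n q : ℕ) =
      if (q : ℕ) ≤ 1 then 2 else if (q : ℕ) + 1 = n then 0 else (q : ℕ) + 1 := by
  have h1 := Fin.val_one_of_lt (show 1 < n by omega)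
  have h2 := Fin.val_ofNat_of_lt (show 2 < n by omega)
  simp only [mapC, Fin.ext_iff, Fin.val_zero, h1]
  split_ifs <;> simp only [h2, Fin.val_add_one_eq_ite] <;> (try split_ifs) <;> omega

theorem mapE_val (hn : 3 ≤ n) (q : Fin n) :
    (mapE n q : ℕ) = if (q : ℕ) = 0 then 2 else if (q : ℕ) + 1 = n then 0 else
      if (q : ℕ) = 1 then (if n = 3 then 0 else 3) else (q : ℕ) + 1 := by
  have h1 := Fin.val_one_of_lt (show 1 < n by omega)
  have h2 := Fin.val_ofNat_of_lt (show 2 < n by omega)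
  simp only [mapE, Fin.ext_iff, Fin.val_zero, h1, h2]
  split_ifs <;> simp only [h2, Fin.val_add_one_eq_ite, val_three hn] <;>
    (try split_ifs) <;> omega

def arc (s : Fin n) (k : ℕ) : Set (Fin n) :=
  {q | ((q - s : Fin n) : ℕ) ≤ k}

def arcCost (s : Fin n) (k : ℕ) : ℕ :=
  (n - 1) * (n - 2 - k) + ((s - 2 : Fin n) : ℕ)

theorem mem_arc_zero {s q : Fin n} : q ∈ arc s 0 ↔ q = s := by
  simp [arc, Fin.val_eq_zero_iff, sub_eq_zero]

theorem arc_ne_univ (hn : 2 ≤ n) (s : Fin n) {k : ℕ} (hk : k < n - 1) : arc s k ≠ Set.univ := by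
  intro h
  have hs : s - 1 ∈ arc s k := h ▸ Set.mem_univ _
  simp only [arc, Set.mem_ofPred_eq, Fin.val_sub_eq_ite,
    Fin.val_one_of_lt (show 1 < n by omega)] at hs
  split_ifs at hs <;> omega

theorem preimage_mapA_arc (s : Fin n) (k : ℕ) : mapA n ⁻¹' arc s k = arc (s - 1) k := by
  ext q
  simp only [arc, mapA, Set.mem_preimage, Set.mem_ofPred_eq]
  rw [show q + 1 - s = q - (s - 1) by abel]

theorem preimage_mapB_arc (hn : 3 ≤ n) {s : Fin n} (hs : s ≠ 2) (k : ℕ) :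
    mapB n ⁻¹' arc s k ⊆ arc s k := by
  intro q hq
  rw [Ne, Fin.ext_iff, Fin.val_ofNat_of_lt (show 2 < n by omega)] at hs
  simp only [arc, Set.mem_preimage, Set.mem_ofPred_eq, Fin.val_sub_eq_ite, mapB_val hn] at hq ⊢
  split_ifs at hq ⊢ <;> omega

theorem preimage_mapB_arc_two (hn : 3 ≤ n) (k : ℕ) :
    mapB n ⁻¹' arc 2 k ⊆ arc 1 (k + 1) := by
  intro q hq
  simp only [arc, Set.mem_preimage, Set.mem_ofPred_eq, Fin.val_sub_eq_ite, mapB_val hn,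
    Fin.val_one_of_lt (show 1 < n by omega),
    Fin.val_ofNat_of_lt (show 2 < n by omega)] at hq ⊢
  split_ifs at hq ⊢ <;> omega

theorem preimage_mapC_arc (hn : 3 ≤ n) {s : Fin n} (hs : s ≠ 2) (k : ℕ) :
    mapC n ⁻¹' arc s k ⊆ arc (s - 1) k := by
  intro q hq
  rw [Ne, Fin.ext_iff, Fin.val_ofNat_of_lt (show 2 < n by omega)] at hs
  simp only [arc, Set.mem_preimage, Set.mem_ofPred_eq, Fin.val_sub_eq_ite, mapC_val hn,
    Fin.val_one_of_lt (show 1 < n by omega)] at hq ⊢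
  split_ifs at hq ⊢ <;> omega

theorem preimage_mapC_arc_two (hn : 3 ≤ n) (k : ℕ) :
    mapC n ⁻¹' arc 2 k ⊆ arc 0 (k + 1) := by
  intro q hq
  simp only [arc, Set.mem_preimage, Set.mem_ofPred_eq, Fin.val_sub_eq_ite, mapC_val hn,
    Fin.val_zero, zero_le, if_true, Nat.sub_zero,
    Fin.val_ofNat_of_lt (show 2 < n by omega)] at hq ⊢
  split_ifs at hq ⊢ <;> omega

theorem preimage_mapE_arc (hn : 3 ≤ n) {s : Fin n} (hs₂ : s ≠ 2) (hs₃ : s ≠ 3) (k : ℕ) :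
    mapE n ⁻¹' arc s k ⊆ arc (s - 1) k := by
  intro q hq
  rw [Ne, Fin.ext_iff, Fin.val_ofNat_of_lt (show 2 < n by omega)] at hs₂
  rw [Ne, Fin.ext_iff, val_three hn] at hs₃
  simp only [arc, Set.mem_preimage, Set.mem_ofPred_eq, Fin.val_sub_eq_ite, mapE_val hn,
    Fin.val_one_of_lt (show 1 < n by omega)] at hq ⊢
  split_ifs at hs₃ hq ⊢ <;> omega

theorem preimage_mapE_arc_two (hn : 3 ≤ n) (k : ℕ) :
    mapE n ⁻¹' arc 2 k ⊆ arc 0 (k + 1) := by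
  intro q hq
  simp only [arc, Set.mem_preimage, Set.mem_ofPred_eq, Fin.val_sub_eq_ite, mapE_val hn,
    Fin.val_zero, zero_le, if_true, Nat.sub_zero,
    Fin.val_ofNat_of_lt (show 2 < n by omega)] at hq ⊢
  split_ifs at hq ⊢ <;> omega

theorem preimage_mapE_arc_three (hn : 3 ≤ n) {k : ℕ} (hk : k < n - 1) :
    mapE n ⁻¹' arc 3 k ⊆ arc 1 (min (k + 1) (n - 2)) := by
  intro q hq
  simp only [arc, Set.mem_preimage, Set.mem_ofPred_eq, Fin.val_sub_eq_ite, mapE_val hn,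
    val_three hn, Fin.val_one_of_lt (show 1 < n by omega)] at hq ⊢
  split_ifs at hq ⊢ <;> omega


theorem arcCost_le_of_val_le {s s' : Fin n} (k : ℕ)
    (h : ((s - 2 : Fin n) : ℕ) ≤ ((s' - 2 : Fin n) : ℕ) + 1) :
    arcCost s k ≤ arcCost s' k + 1 := by
  unfold arcCost
  omega

theorem arcCost_le_succ {s s' : Fin n} {k : ℕ} (hk : k < n - 2)
    (h : n - 1 + ((s - 2 : Fin n) : ℕ) ≤ ((s' - 2 : Fin n) : ℕ) + 1) :
    arcCost s k ≤ arcCost s' (k + 1) + 1 := by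
  unfold arcCost
  rw [show n - 2 - k = n - 2 - (k + 1) + 1 by omega, Nat.mul_succ]
  omega

theorem arcCost_le_sub_one (hn : 3 ≤ n) (s : Fin n) (k : ℕ) :
    arcCost s k ≤ arcCost (s - 1) k + 1 := by
  apply arcCost_le_of_val_le
  simp only [Fin.val_sub_eq_ite, Fin.val_one_of_lt (show 1 < n by omega),
    Fin.val_ofNat_of_lt (show 2 < n by omega)]
  split_ifs <;> omega

theorem arcCost_two_last : arcCost (2 : Fin n) (n - 2) = 0 := by
  simp [arcCost]

def ArcPullsBack (f : Fin n → Fin n) (s : Fin n) (k : ℕ) : Prop :=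
  arcCost s k = 0 ∨
    ∃ s' k', k' < n - 1 ∧ f ⁻¹' arc s k ⊆ arc s' k' ∧ arcCost s k ≤ arcCost s' k' + 1

theorem arcPullsBack_two {f : Fin n → Fin n} {s' : Fin n} (hn : 3 ≤ n) (hs' : (s' : ℕ) ≤ 1)
    {k : ℕ} (hk : k < n - 1) (hf : f ⁻¹' arc 2 k ⊆ arc s' (k + 1)) : ArcPullsBack f 2 k := by
  obtain rfl | hk₂ : k = n - 2 ∨ k < n - 2 := by omega
  · exact Or.inl arcCost_two_last
  refine Or.inr ⟨s', k + 1, by omega, hf, arcCost_le_succ hk₂ ?_⟩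
  simp only [Fin.val_sub_eq_ite, Fin.val_ofNat_of_lt (show 2 < n by omega)]
  split_ifs <;> omega

theorem arcPullsBack_mapA (hn : 3 ≤ n) (s : Fin n) {k : ℕ} (hk : k < n - 1) :
    ArcPullsBack (mapA n) s k :=
  Or.inr ⟨s - 1, k, hk, (preimage_mapA_arc s k).subset, arcCost_le_sub_one hn s k⟩

theorem arcPullsBack_mapB (hn : 3 ≤ n) (s : Fin n) {k : ℕ} (hk : k < n - 1) :
    ArcPullsBack (mapB n) s k := by
  by_cases hs : s = 2
  · subst hs
    exact arcPullsBack_two hn (Fin.val_one_of_lt (by omega)).le hk (preimage_mapB_arc_two hn k)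
  · exact Or.inr ⟨s, k, hk, preimage_mapB_arc hn hs k, Nat.le_succ _⟩

theorem arcPullsBack_mapC (hn : 3 ≤ n) (s : Fin n) {k : ℕ} (hk : k < n - 1) :
    ArcPullsBack (mapC n) s k := by
  by_cases hs : s = 2
  · subst hs
    exact arcPullsBack_two hn (by simp) hk (preimage_mapC_arc_two hn k)
  · exact Or.inr ⟨s - 1, k, hk, preimage_mapC_arc hn hs k, arcCost_le_sub_one hn s k⟩

theorem arcCost_three_le (hn : 3 ≤ n) {k : ℕ} (hk : k < n - 1) :
    arcCost (3 : Fin n) k ≤ arcCost (1 : Fin n) (min (k + 1) (n - 2)) + 1 := by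
  have hval : ((3 - 2 : Fin n) : ℕ) = 1 ∧ ((1 - 2 : Fin n) : ℕ) = n - 1 := by
    simp only [Fin.val_sub_eq_ite, val_three hn, Fin.val_one_of_lt (show 1 < n by omega),
      Fin.val_ofNat_of_lt (show 2 < n by omega)]
    split_ifs <;> omega
  obtain hk₂ | rfl : k < n - 2 ∨ k = n - 2 := by omega
  · rw [min_eq_left (by omega)]
    exact arcCost_le_succ hk₂ (by omega)
  · rw [min_eq_right (by omega)]
    exact arcCost_le_of_val_le _ (by omega)

theorem arcPullsBack_mapE (hn : 3 ≤ n) (s : Fin n) {k : ℕ} (hk : k < n - 1) :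
    ArcPullsBack (mapE n) s k := by
  by_cases hs₂ : s = 2
  · subst hs₂
    exact arcPullsBack_two hn (by simp) hk (preimage_mapE_arc_two hn k)
  by_cases hs₃ : s = 3
  · subst hs₃
    exact Or.inr ⟨1, _, by omega, preimage_mapE_arc_three hn hk, arcCost_three_le hn hk⟩
  exact Or.inr ⟨s - 1, k, hk, preimage_mapE_arc hn hs₂ hs₃ k, arcCost_le_sub_one hn s k⟩

theorem arcPullsBack_deltaAd (hn : 3 ≤ n) (x : Fin 4) (s : Fin n) {k : ℕ} (hk : k < n - 1) :
    ArcPullsBack (deltaAd n x) s k := by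
  fin_cases x
  exacts [arcPullsBack_mapA hn s hk, arcPullsBack_mapB hn s hk, arcPullsBack_mapC hn s hk,
    arcPullsBack_mapE hn s hk]

theorem lt_length_of_isSyncWord (hn : 3 ≤ n) {w : List (Fin 4)}
    (hw : IsSyncWord (deltaAd n) w) : (n - 1) * (n - 2) < w.length := by
  obtain ⟨qs, hqs⟩ := hw
  have hcost := lt_length_of_forall_foldl_mem (deltaAd n)
    (fun p : Fin n × Fin (n - 1) => arc p.1 p.2) (fun p => arcCost p.1 p.2)
    (fun p => arc_ne_univ (by omega) p.1 p.2.isLt) ?_ w (qs, ⟨0, by omega⟩)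
    (fun q => mem_arc_zero.2 (hqs q))
  · simp only [arcCost, Nat.sub_zero] at hcost
    exact lt_of_le_of_lt (Nat.le_add_right _ _) hcost
  · rintro x ⟨s, k, hk⟩
    rcases arcPullsBack_deltaAd hn x s hk with hzero | ⟨s', k', hk', hsub, hle⟩
    exacts [Or.inl hzero, Or.inr ⟨(s', ⟨k', hk'⟩), hsub, hle⟩]

open Fin.CommRing in
theorem foldl_replicate_zero (k : ℕ) (q : Fin n) :
    (List.replicate k (0 : Fin 4)).foldl (fun s x => deltaAd n x s) q = q + (k : Fin n) := by
  induction k generalizing q with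
  | zero => simp
  | succ k ih =>
    rw [List.replicate_succ, List.foldl_cons, ih]
    change q + 1 + _ = _
    push_cast
    ring

open Fin.CommRing in
theorem foldl_round_mem_arc (hn : 3 ≤ n) {k : ℕ} {q : Fin n} (hq : q ∈ arc 2 (k + 1)) :
    (List.replicate (n - 2) (0 : Fin 4) ++ [2]).foldl (fun s x => deltaAd n x s) q ∈
      arc 2 k := by
  rw [List.foldl_append, foldl_replicate_zero, Nat.cast_sub (by omega), Fin.natCast_self,
    zero_sub, ← sub_eq_add_neg]
  change mapC n (q - 2) ∈ arc 2 k
  simp only [arc, Set.mem_ofPred_eq, Fin.val_sub_eq_ite, mapC_val hn,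
    Fin.val_ofNat_of_lt (show 2 < n by omega)] at hq ⊢
  split_ifs at hq ⊢ <;> omega

theorem foldl_rounds_mem_arc (hn : 3 ≤ n) (j : ℕ) {k : ℕ} {q : Fin n} (hq : q ∈ arc 2 (k + j)) :
    (List.replicate j (List.replicate (n - 2) (0 : Fin 4) ++ [2])).flatten.foldl
      (fun s x => deltaAd n x s) q ∈ arc 2 k := by
  induction j generalizing q with
  | zero => simpa using hq
  | succ j ih =>
    rw [List.replicate_succ, List.flatten_cons, List.foldl_append]
    exact ih (foldl_round_mem_arc hn hq)

theorem mapB_mem_arc_two (hn : 3 ≤ n) (q : Fin n) : mapB n q ∈ arc 2 (n - 2) := by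
  simp only [arc, Set.mem_ofPred_eq, Fin.val_sub_eq_ite, mapB_val hn,
    Fin.val_ofNat_of_lt (show 2 < n by omega)]
  have := q.isLt
  split_ifs <;> omega

def syncWord (n : ℕ) : List (Fin 4) :=
  1 :: (List.replicate (n - 2) (List.replicate (n - 2) 0 ++ [2])).flatten

theorem isSyncWord_syncWord (hn : 3 ≤ n) : IsSyncWord (deltaAd n) (syncWord n) := by
  refine ⟨2, fun q => mem_arc_zero.1 ?_⟩
  rw [syncWord, List.foldl_cons]
  exact foldl_rounds_mem_arc hn (n - 2) (by rw [zero_add]; exact mapB_mem_arc_two hn q)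

omit [NeZero n] in
theorem length_syncWord : (syncWord n).length = (n - 1) * (n - 2) + 1 := by
  simp only [syncWord, List.length_cons, List.length_flatten, List.map_replicate,
    List.sum_replicate, List.length_append, List.length_replicate, smul_eq_mul]
  rcases n with _ | _ | n <;> simp [Nat.mul_comm]

end Aminusd

/-- for n ≥ 3, `A^{-d}` has shortest synchronizing word length exactly
`n² - 3n + 3`; in particular `b(a^{n-2}c)^{n-2}`, of that length, is synchronizing. -/
theorem shortestSync_Aminusd (n : ℕ) (hn : 3 ≤ n) [NeZero n] :
    let w : List (Fin 4) :=
      1 :: (List.replicate (n - 2) (List.replicate (n - 2) 0 ++ [2])).flatten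
    shortestSync (deltaAd n) = n ^ 2 - 3 * n + 3 ∧
    w.length = n ^ 2 - 3 * n + 3 ∧ IsSyncWord (deltaAd n) w := by
  intro w
  have hlen : w.length = n ^ 2 - 3 * n + 3 := by
    rw [sq_sub_three_mul_add_three hn]
    exact Aminusd.length_syncWord
  have hsync : IsSyncWord (deltaAd n) w := Aminusd.isSyncWord_syncWord hn
  refine ⟨IsLeast.csInf_eq ⟨⟨w, hsync, hlen⟩, ?_⟩, hlen, hsync⟩
  rintro _ ⟨w', hw', rfl⟩
  rw [sq_sub_three_mul_add_three hn]
  exact Aminusd.lt_length_of_isSyncWord hn hw'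
end

section
/- For n ≥ 3, the DFA A^{-bcd} with states {1,...,n} and only symbols a and e has shortest synchronizing word length n^2 - 3n + 4; in particular, (ea^{n-2})^{n-2}ae is a synchronizing word of this length, using that 1·ea^{n-2} = 1, 2·ea^{n-2} = 2 and q·ea^{n-2} = q-1 for 3 ≤ q ≤ n. -/
/-- The DFA `A^{-bcd}` with the two symbols `a` (index 0) and `e` (index 1). -/
def deltaAe (n : ℕ) [NeZero n] : Fin 2 → Fin n → Fin n :=
  ![mapA n, mapE n]

/-!
The letter `a` is the cyclic shift and `e` agrees with it except that it sends `0` to `2` and `1` to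
`3`, so the only merge is `e` collapsing `1` and `2`. For `p ∈ S` let the spread of `S` at `p` be
the largest cyclic distance `q - p` with `q ∈ S`, and weigh `p` by `(1 - p) + (n - 1) · spread`: the
shifts that bring `p` to the merging position, plus a full turn for every unit of spread. The least
weight drops by at most one per letter. Since `a` permutes the states, a synchronizing word may be
assumed to begin with `e`, and the image of all states under `e` (every state but `1`) has least
weight `(n - 1)²`; this gives the lower bound `n² - 3n + 4`. Conversely `e a^(n-2)` fixes `0` and
`1` and lowers every other state by one, so `(e a^(n-2))^(n-2)` maps all states into `{0, 1}`, which
`a e` sends to `3`.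
-/

open Finset Fin.CommRing

theorem List.foldl_replicate {α β : Type*} (f : β → α → β) (a : α) (m : ℕ) (b : β) :
    (List.replicate m a).foldl f b = (fun b => f b a)^[m] b := by
  induction m generalizing b with
  | zero => rfl
  | succ m ih => exact ih (f b a)

section Synchronization

variable {α σ : Type*}

def Synchronizes (δ : σ → α → α) (w : List σ) (S : Finset α) : Prop :=
  ∃ t, ∀ q ∈ S, w.foldl (fun s x => δ x s) q = t

variable {δ : σ → α → α}

theorem synchronizes_cons [DecidableEq α] {x : σ} {w : List σ} {S : Finset α} :
    Synchronizes δ (x :: w) S ↔ Synchronizes δ w (S.image (δ x)) := by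
  simp [Synchronizes]

theorem Synchronizes.card_le_one {S : Finset α} (h : Synchronizes δ [] S) : S.card ≤ 1 := by
  obtain ⟨t, ht⟩ := h
  exact Finset.card_le_one.2 fun a ha b hb => (ht a ha).trans (ht b hb).symm

theorem Synchronizes.le_length_add [DecidableEq α] (Φ : Finset α → ℕ) (c : ℕ)
    (hsmall : ∀ S : Finset α, S.card ≤ 1 → Φ S ≤ c)
    (hstep : ∀ (S : Finset α) (x : σ), Φ S ≤ Φ (S.image (δ x)) + 1) :
    ∀ {w : List σ} {S : Finset α}, Synchronizes δ w S → Φ S ≤ w.length + c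
  | [], S, h => by simpa using hsmall S h.card_le_one
  | x :: w, S, h => by
    have := (synchronizes_cons.1 h).le_length_add Φ c hsmall hstep
    have := hstep S x
    simp only [List.length_cons]
    omega

theorem isSyncWord_iff_synchronizes_univ {n k : ℕ} {δ : Fin k → Fin n → Fin n}
    {w : List (Fin k)} : IsSyncWord δ w ↔ Synchronizes δ w univ := by
  simp [IsSyncWord, Synchronizes]

theorem shortestSync_eq {n k : ℕ} {δ : Fin k → Fin n → Fin n} {w : List (Fin k)} {L : ℕ}
    (hw : IsSyncWord δ w) (hlen : w.length = L)
    (hmin : ∀ w' : List (Fin k), IsSyncWord δ w' → L ≤ w'.length) :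
    shortestSync δ = L :=
  le_antisymm (Nat.sInf_le ⟨w, hw, hlen⟩)
    (le_csInf ⟨L, w, hw, hlen⟩ fun _ ⟨w', hw', hL⟩ => hL ▸ hmin w' hw')

end Synchronization

namespace Fin

variable {n : ℕ}

theorem val_sub_cases (a b : Fin n) :
    b.val ≤ a.val ∧ (a - b).val = a.val - b.val ∨
      a.val < b.val ∧ (a - b).val = n + a.val - b.val := by
  rcases le_or_gt b a with h | h
  · exact .inl ⟨h, coe_sub_iff_le.2 h⟩
  · exact .inr ⟨h, coe_sub_iff_lt.2 h⟩

theorem val_one_of_two_le [NeZero n] (hn : 2 ≤ n) : (1 : Fin n).val = 1 :=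
  Nat.mod_eq_of_lt hn

theorem val_two_of_three_le [NeZero n] (hn : 3 ≤ n) : (2 : Fin n).val = 2 :=
  Nat.mod_eq_of_lt hn

theorem val_add_one_le [NeZero n] (a : Fin n) : (a + 1).val ≤ a.val + 1 := by
  rw [val_add, val_one']
  exact (Nat.mod_le _ _).trans (Nat.add_le_add_left (Nat.mod_le _ _) _)

end Fin

namespace Nat

theorem sub_one_mul_sub_one_eq (n : ℕ) : (n - 1) * (n - 1) = (n - 1) * (n - 2) + (n - 1) := by
  rcases Nat.lt_or_ge n 2 with h | h
  · interval_cases n <;> rfl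
  · rw [← Nat.mul_add_one]
    congr 1
    omega

theorem sq_sub_three_mul_add_four {n : ℕ} (hn : 3 ≤ n) :
    n ^ 2 - 3 * n + 4 = (n - 1) * (n - 2) + 2 := by
  obtain ⟨m, rfl⟩ : ∃ m, n = m + 3 := ⟨n - 3, by omega⟩
  simp only [show m + 3 - 2 = m + 1 by omega, show m + 3 - 1 = m + 2 by omega]
  ring_nf
  omega

end Nat

namespace Aminusbcd

def cycleWord (n : ℕ) : List (Fin 2) :=
  1 :: List.replicate (n - 2) 0

def syncWord (n : ℕ) : List (Fin 2) :=
  (List.replicate (n - 2) (cycleWord n)).flatten ++ [0, 1]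

theorem length_syncWord {n : ℕ} (hn : 3 ≤ n) : (syncWord n).length = n ^ 2 - 3 * n + 4 := by
  rw [Nat.sq_sub_three_mul_add_four hn]
  simp only [syncWord, cycleWord, List.length_append, List.length_flatten, List.map_replicate,
    List.sum_replicate, List.length_cons, List.length_replicate, List.length_nil, smul_eq_mul]
  rw [show n - 2 + 1 = n - 1 by omega, Nat.mul_comm]

variable {n : ℕ} [NeZero n]

theorem val_mapE (hn : 3 ≤ n) (q : Fin n) :
    q.val = 0 ∧ (mapE n q).val = 2 ∨
    (q.val = 1 ∨ q.val = 2) ∧ (mapE n q).val = 3 % n ∨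
    3 ≤ q.val ∧ q.val + 1 < n ∧ (mapE n q).val = q.val + 1 ∨
    3 ≤ q.val ∧ q.val + 1 = n ∧ (mapE n q).val = 0 := by
  have h1 := Fin.val_one_of_two_le (n := n) (by omega)
  have h2 := Fin.val_two_of_three_le hn
  have hq := q.isLt
  unfold mapE
  split_ifs with h0 h1' h2'
  · simp_all
  · subst h1'; right; left; simp_all
  · subst h2'; right; left; simp_all
  · have hv0 : q.val ≠ 0 := fun h => h0 (Fin.ext h)
    have hv1 : q.val ≠ 1 := fun h => h1' (Fin.ext (by omega))
    have hv2 : q.val ≠ 2 := fun h => h2' (Fin.ext (by omega))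
    rw [Fin.val_add, h1]
    rcases Nat.lt_or_ge (q.val + 1) n with h | h
    · rw [Nat.mod_eq_of_lt h]; omega
    · rw [show q.val + 1 = n by omega, Nat.mod_self]; omega

theorem three_mod_cases (hn : 3 ≤ n) : n = 3 ∧ 3 % n = 0 ∨ 3 < n ∧ 3 % n = 3 := by
  rcases hn.eq_or_lt with rfl | h
  · simp
  · exact .inr ⟨h, Nat.mod_eq_of_lt h⟩

def spread (S : Finset (Fin n)) (p : Fin n) : ℕ :=
  S.sup fun q => (q - p).val

def weight (S : Finset (Fin n)) (p : Fin n) : ℕ :=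
  (1 - p).val + (n - 1) * spread S p

/-- Sets of at most one state get `n - 2`, one less than the potential of the pair `{1, 2}` that `e`
merges. -/
def potential (S : Finset (Fin n)) : ℕ :=
  if h : 2 ≤ S.card then S.inf' (card_pos.1 (by omega)) (weight S) else n - 2

theorem le_weight {S : Finset (Fin n)} {q : Fin n} (hq : q ∈ S) (p : Fin n) :
    (1 - p).val + (n - 1) * (q - p).val ≤ weight S p :=
  Nat.add_le_add_left (Nat.mul_le_mul_left _ (le_sup (f := fun q => (q - p).val) hq)) _

theorem weight_le_weight_image {S : Finset (Fin n)} {f : Fin n → Fin n} {p p' : Fin n} (c : ℕ)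
    (hshift : (1 - p).val + (n - 1) * c ≤ (1 - p').val + 1)
    (hdist : ∀ q ∈ S, (q - p).val ≤ (f q - p').val + c) :
    weight S p ≤ weight (S.image f) p' + 1 := by
  have hspread : spread S p ≤ spread (S.image f) p' + c :=
    Finset.sup_le fun q hq => (hdist q hq).trans <| Nat.add_le_add_right
      (le_sup (f := fun r => (r - p').val) (mem_image_of_mem f hq)) c
  have := Nat.mul_le_mul_left (n - 1) hspread
  rw [Nat.mul_add] at this
  unfold weight
  omega

theorem potential_le_potential_add_one {S T : Finset (Fin n)} (hS : 2 ≤ S.card)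
    (hT : 2 ≤ T.card) (h : ∀ p' ∈ T, ∃ p ∈ S, weight S p ≤ weight T p' + 1) :
    potential S ≤ potential T + 1 := by
  obtain ⟨p', hp', hmin⟩ := exists_mem_eq_inf' (s := T) (card_pos.1 (by omega)) (weight T)
  obtain ⟨p, hp, hle⟩ := h p' hp'
  rw [potential, dif_pos hS, potential, dif_pos hT, hmin]
  exact (inf'_le _ hp).trans hle

theorem exists_weight_le_image_mapA (S : Finset (Fin n)) {p' : Fin n}
    (hp' : p' ∈ S.image (mapA n)) :
    ∃ p ∈ S, weight S p ≤ weight (S.image (mapA n)) p' + 1 := by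
  obtain ⟨p, hp, rfl⟩ := mem_image.1 hp'
  refine ⟨p, hp, weight_le_weight_image 0 ?_ fun q _ => ?_⟩
  · rw [Nat.mul_zero, Nat.add_zero, show 1 - p = 1 - mapA n p + 1 by simp only [mapA]; ring]
    exact Fin.val_add_one_le _
  · simp only [mapA, add_sub_add_right_eq_sub, Nat.add_zero, le_refl]

theorem exists_weight_le_image_mapE (hn : 3 ≤ n) (S : Finset (Fin n)) {p' : Fin n}
    (hp' : p' ∈ S.image (mapE n)) :
    ∃ p ∈ S, weight S p ≤ weight (S.image (mapE n)) p' + 1 := by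
  obtain ⟨p₀, hp₀, rfl⟩ := mem_image.1 hp'
  have h1 := Fin.val_one_of_two_le (n := n) (by omega)
  have h3 := three_mod_cases hn
  have hp₀e := val_mapE hn p₀
  have hshift := Fin.val_sub_cases 1 p₀
  have hshift' := Fin.val_sub_cases 1 (mapE n p₀)
  have := p₀.isLt
  -- The witness is `p₀`, or `1` when `e` sends `p₀` and `1` to the same state `3`. The spread
  -- grows by one only for the witnesses `0` and `1`, whose images cost `n - 2` more shifts.
  by_cases hsplit : p₀.val = 1 ∨ p₀.val = 2
  · by_cases h1S : (1 : Fin n) ∈ S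
    · refine ⟨1, h1S, weight_le_weight_image 1 (by rw [sub_self, Fin.val_zero]; omega)
        fun q _ => ?_⟩
      have := Fin.val_sub_cases q 1
      have := Fin.val_sub_cases (mapE n q) (mapE n p₀)
      have := val_mapE hn q
      omega
    · have hp₀2 : p₀.val = 2 := by
        rcases hsplit with h | h
        · exact absurd (Fin.ext (h.trans h1.symm) ▸ hp₀) h1S
        · exact h
      refine ⟨p₀, hp₀, weight_le_weight_image 0 (by omega) fun q hq => ?_⟩
      have hq1 : q.val ≠ 1 := fun h => h1S (Fin.ext (h.trans h1.symm) ▸ hq)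
      have := Fin.val_sub_cases q p₀
      have := Fin.val_sub_cases (mapE n q) (mapE n p₀)
      have := val_mapE hn q
      omega
  · refine ⟨p₀, hp₀, weight_le_weight_image (if p₀.val = 0 then 1 else 0) ?_
      fun q _ => ?_⟩
    · split_ifs <;> omega
    · have := Fin.val_sub_cases q p₀
      have := Fin.val_sub_cases (mapE n q) (mapE n p₀)
      have := val_mapE hn q
      split_ifs <;> omega

theorem val_eq_one_or_two_of_mapE_eq (hn : 3 ≤ n) {a b : Fin n} (h : mapE n a = mapE n b)
    (hab : a ≠ b) : a.val = 1 ∨ a.val = 2 := by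
  have := congrArg Fin.val h
  have := Fin.val_ne_of_ne hab
  have := val_mapE hn a
  have := val_mapE hn b
  have := three_mod_cases hn
  omega

theorem potential_le_of_card_image_mapE_le_one (hn : 3 ≤ n) {S : Finset (Fin n)}
    (hS : 2 ≤ S.card) (hT : (S.image (mapE n)).card ≤ 1) : potential S ≤ n - 1 := by
  have h1 := Fin.val_one_of_two_le (n := n) (by omega)
  have hval : ∀ q ∈ S, q.val = 1 ∨ q.val = 2 := fun q hq => by
    obtain ⟨r, hr, hrq⟩ := exists_mem_ne (s := S) (by omega) q
    exact val_eq_one_or_two_of_mapE_eq hn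
      (card_le_one.1 hT _ (mem_image_of_mem _ hq) _ (mem_image_of_mem _ hr)) hrq.symm
  obtain ⟨p, hp, hp1⟩ : ∃ p ∈ S, p.val = 1 := by
    obtain ⟨a, ha, b, hb, hab⟩ := one_lt_card.1 hS
    have := Fin.val_ne_of_ne hab
    rcases hval a ha with h | h
    · exact ⟨a, ha, h⟩
    · exact ⟨b, hb, by have := hval b hb; omega⟩
  have hspread : spread S p ≤ 1 := Finset.sup_le fun q hq => by
    have := hval q hq
    have := Fin.val_sub_cases q p
    omega
  have := Nat.mul_le_mul_left (n - 1) hspread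
  have := Fin.val_sub_cases 1 p
  rw [potential, dif_pos hS]
  refine (inf'_le _ hp).trans ?_
  unfold weight
  omega

theorem mapA_injective : Function.Injective (mapA n) :=
  fun _ _ h => add_right_cancel h

theorem potential_le_potential_image_add_one (hn : 3 ≤ n) (S : Finset (Fin n)) (x : Fin 2) :
    potential S ≤ potential (S.image (deltaAe n x)) + 1 := by
  by_cases hS : 2 ≤ S.card
  swap
  · have := card_image_le (s := S) (f := deltaAe n x)
    rw [potential, dif_neg hS, potential, dif_neg (by omega)]
    omega
  by_cases hT : 2 ≤ (S.image (deltaAe n x)).card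
  · refine potential_le_potential_add_one hS hT fun p' hp' => ?_
    fin_cases x
    · exact exists_weight_le_image_mapA S hp'
    · exact exists_weight_le_image_mapE hn S hp'
  · rw [show potential (S.image (deltaAe n x)) = n - 2 from dif_neg hT]
    fin_cases x
    · exact absurd ((card_image_of_injective S mapA_injective).symm ▸ hS) hT
    · have := potential_le_of_card_image_mapE_le_one hn hS
        (by change ¬2 ≤ (S.image (mapE n)).card at hT; omega)
      omega

theorem mem_image_mapE_univ (hn : 3 ≤ n) {q : Fin n} (hq : q ≠ 1) :
    q ∈ univ.image (mapE n) := by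
  have h1 := Fin.val_one_of_two_le (n := n) (by omega)
  have := Fin.val_ne_of_ne hq
  have := three_mod_cases hn
  have := q.isLt
  by_cases h2 : q.val = 2
  · refine mem_image.2 ⟨0, mem_univ _, Fin.ext ?_⟩
    have := val_mapE hn 0
    simp only [Fin.val_zero] at this
    omega
  · refine mem_image.2 ⟨q - 1, mem_univ _, Fin.ext ?_⟩
    have := val_mapE hn (q - 1)
    have := Fin.val_sub_cases q 1
    omega

theorem mul_le_potential_image_mapE_univ (hn : 3 ≤ n) :
    (n - 1) * (n - 1) ≤ potential (univ.image (mapE n)) := by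
  have h1 := Fin.val_one_of_two_le (n := n) (by omega)
  have h2 := Fin.val_two_of_three_le hn
  have h0 := Fin.val_zero n
  have h0R : (0 : Fin n) ∈ univ.image (mapE n) :=
    mem_image_mapE_univ hn (Fin.ne_of_val_ne (by omega))
  have h2R : (2 : Fin n) ∈ univ.image (mapE n) :=
    mem_image_mapE_univ hn (Fin.ne_of_val_ne (by omega))
  have hR : 2 ≤ (univ.image (mapE n)).card :=
    one_lt_card.2 ⟨0, h0R, 2, h2R, Fin.ne_of_val_ne (by omega)⟩
  rw [potential, dif_pos hR]
  refine le_inf' _ _ fun p hp => ?_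
  have hp1 : p.val ≠ 1 := by
    obtain ⟨q, -, rfl⟩ := mem_image.1 hp
    have := val_mapE hn q
    have := three_mod_cases hn
    omega
  have := Nat.sub_one_mul_sub_one_eq n
  by_cases hp2 : p.val = 2
  · have hw := le_weight h0R p
    have := Fin.val_sub_cases 1 p
    have := Fin.val_sub_cases 0 p
    rw [show (0 - p).val = n - 2 by simp only [Fin.val_zero] at this; omega] at hw
    omega
  · have hmem : p - 1 ∈ univ.image (mapE n) := mem_image_mapE_univ hn fun h => by
      have := Fin.val_sub_cases p 1
      have := congrArg Fin.val h
      omega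
    have hw := le_weight hmem p
    have := Fin.val_sub_cases (0 : Fin n) 1
    rw [show p - 1 - p = 0 - 1 by ring,
      show (0 - 1 : Fin n).val = n - 1 by simp only [Fin.val_zero] at this; omega] at hw
    omega

theorem le_length_of_isSyncWord (hn : 3 ≤ n) {w : List (Fin 2)}
    (hw : IsSyncWord (deltaAe n) w) : n ^ 2 - 3 * n + 4 ≤ w.length := by
  rw [isSyncWord_iff_synchronizes_univ] at hw
  induction w with
  | nil =>
    have := hw.card_le_one
    rw [card_univ, Fintype.card_fin] at this
    omega
  | cons x w ih =>
    rw [synchronizes_cons] at hw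
    fin_cases x
    · have hw : Synchronizes (deltaAe n) w (univ.image (mapA n)) := hw
      have := ih (image_univ_of_surjective
        (Finite.injective_iff_surjective.1 (mapA_injective (n := n))) ▸ hw)
      simp only [List.length_cons]
      omega
    · have hw : Synchronizes (deltaAe n) w (univ.image (mapE n)) := hw
      have := hw.le_length_add potential (n - 2)
        (fun (S : Finset (Fin n)) hS => by rw [potential, dif_neg (by omega)])
        (potential_le_potential_image_add_one hn)
      have := mul_le_potential_image_mapE_univ hn
      have := Nat.sq_sub_three_mul_add_four hn
      have := Nat.sub_one_mul_sub_one_eq n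
      simp only [List.length_cons]
      omega

theorem foldl_replicate_zero (k : ℕ) (q : Fin n) :
    (List.replicate k (0 : Fin 2)).foldl (fun s x => deltaAe n x s) q = q + k := by
  rw [List.foldl_replicate]
  exact congrFun (add_right_iterate 1 k) q ▸ by rw [nsmul_one]

theorem foldl_cycleWord (hn : 3 ≤ n) (q : Fin n) :
    (cycleWord n).foldl (fun s x => deltaAe n x s) q = mapE n q - 2 := by
  rw [cycleWord, List.foldl_cons, foldl_replicate_zero, Nat.cast_sub (by omega), Fin.natCast_self]
  change mapE n q + (0 - ((2 : ℕ) : Fin n)) = _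
  rw [Nat.cast_ofNat]
  ring

theorem foldl_cycleWord_of_val_le_one (hn : 3 ≤ n) {q : Fin n} (hq : q.val ≤ 1) :
    (cycleWord n).foldl (fun s x => deltaAe n x s) q = q := by
  rw [foldl_cycleWord hn]
  refine Fin.ext ?_
  have := Fin.val_sub_cases (mapE n q) 2
  have := val_mapE hn q
  have := Fin.val_two_of_three_le hn
  have := three_mod_cases hn
  omega

theorem val_foldl_cycleWord_of_two_le (hn : 3 ≤ n) {q : Fin n} (hq : 2 ≤ q.val) :
    ((cycleWord n).foldl (fun s x => deltaAe n x s) q).val = q.val - 1 := by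
  rw [foldl_cycleWord hn]
  have := Fin.val_sub_cases (mapE n q) 2
  have := val_mapE hn q
  have := Fin.val_two_of_three_le hn
  have := three_mod_cases hn
  omega

theorem val_iterate_foldl_cycleWord_le (hn : 3 ≤ n) (m : ℕ) (q : Fin n) :
    ((fun r => (cycleWord n).foldl (fun s x => deltaAe n x s) r)^[m] q).val ≤
      max 1 (q.val - m) := by
  induction m with
  | zero => exact le_max_right _ _
  | succ m ih =>
    rw [Function.iterate_succ_apply']
    generalize (fun r => (cycleWord n).foldl (fun s x => deltaAe n x s) r)^[m] q = r at ih ⊢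
    rcases le_or_gt r.val 1 with hr | hr
    · rw [foldl_cycleWord_of_val_le_one hn hr]
      omega
    · rw [val_foldl_cycleWord_of_two_le hn hr]
      omega

theorem foldl_syncWord (hn : 3 ≤ n) (q : Fin n) :
    (syncWord n).foldl (fun s x => deltaAe n x s) q = 3 := by
  rw [syncWord, List.foldl_append, List.foldl_flatten, List.foldl_replicate]
  have hr := val_iterate_foldl_cycleWord_le hn (n - 2) q
  generalize (fun r => (cycleWord n).foldl (fun s x => deltaAe n x s) r)^[n - 2] q = r at hr
  have h1 := Fin.val_one_of_two_le (n := n) (by omega)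
  have hr1 : (r + 1).val = r.val + 1 := by
    rw [Fin.val_add, h1]
    exact Nat.mod_eq_of_lt (by omega)
  have := val_mapE hn (r + 1)
  refine Fin.ext ?_
  change (mapE n (r + 1)).val = 3 % n
  omega

end Aminusbcd

open Aminusbcd in
/-- for n ≥ 3, `A^{-bcd}` has shortest synchronizing word length
`n² - 3n + 4`; in particular `(ea^{n-2})^{n-2}ae` is synchronizing of that length,
using that `1·ea^{n-2} = 1`, `2·ea^{n-2} = 2` and `q·ea^{n-2} = q-1` for `3 ≤ q ≤ n`. -/
theorem shortestSync_Aminusbcd (n : ℕ) (hn : 3 ≤ n) [NeZero n] :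
    let u : List (Fin 2) := 1 :: List.replicate (n - 2) 0
    let w : List (Fin 2) := (List.replicate (n - 2) u).flatten ++ [0, 1]
    shortestSync (deltaAe n) = n ^ 2 - 3 * n + 4 ∧
    w.length = n ^ 2 - 3 * n + 4 ∧ IsSyncWord (deltaAe n) w ∧
    u.foldl (fun s x => deltaAe n x s) 0 = 0 ∧
    u.foldl (fun s x => deltaAe n x s) 1 = 1 ∧
    ∀ q : Fin n, 2 ≤ (q : ℕ) →
      ((u.foldl (fun s x => deltaAe n x s) q : Fin n) : ℕ) = (q : ℕ) - 1 := by
  intro u w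
  have hsync : IsSyncWord (deltaAe n) w := ⟨3, foldl_syncWord hn⟩
  have hlen : w.length = n ^ 2 - 3 * n + 4 := length_syncWord hn
  have h1 := Fin.val_one_of_two_le (n := n) (by omega)
  exact ⟨shortestSync_eq hsync hlen fun _ => le_length_of_isSyncWord hn, hlen, hsync,
    foldl_cycleWord_of_val_le_one hn (by simp), foldl_cycleWord_of_val_le_one hn h1.le,
    fun _ => val_foldl_cycleWord_of_two_le hn⟩
end

section
/- In the DFA A on n ≥ 3 states with symbols a,c,d,e: for every subset S ⊆ Q, if 1 ∉ S then Sa = Sc and Se = Sd; if 2 ∉ S then Sa = Sd and Se = Sc; and if {1,2} ⊆ S then Sc ⊊ Sa and Sc ⊆ Se. -/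
/-- in `A` (n ≥ 3), for every subset `S` of the states:
if `1 ∉ S` then `Sa = Sc` and `Se = Sd`; if `2 ∉ S` then `Sa = Sd` and `Se = Sc`;
and if `{1,2} ⊆ S` then `Sc ⊊ Sa` and `Sc ⊆ Se`.
(State 1 is index 0 and state 2 is index 1.) -/
theorem image_comparisons (n : ℕ) (hn : 3 ≤ n) [NeZero n] (S : Finset (Fin n)) :
    ((0 : Fin n) ∉ S → S.image (mapA n) = S.image (mapC n) ∧
      S.image (mapE n) = S.image (mapD n)) ∧
    ((1 : Fin n) ∉ S → S.image (mapA n) = S.image (mapD n) ∧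
      S.image (mapE n) = S.image (mapC n)) ∧
    ((0 : Fin n) ∈ S → (1 : Fin n) ∈ S →
      S.image (mapC n) ⊂ S.image (mapA n) ∧ S.image (mapC n) ⊆ S.image (mapE n)) := by
  have v1 : ((1 : Fin n) : ℕ) = 1 := by
    rw [Fin.val_one']; exact Nat.mod_eq_of_lt (by omega)
  have v2 : ((2 : Fin n) : ℕ) = 2 := by
    rw [Fin.coe_ofNat_eq_mod]; exact Nat.mod_eq_of_lt (by omega)
  have f1 : (0 : Fin n) + 1 = 1 := by
    apply Fin.ext
    rw [Fin.val_add, Fin.val_zero, v1, Nat.zero_add]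
    exact Nat.mod_eq_of_lt (by omega)
  have f2 : (1 : Fin n) + 1 = 2 := by
    apply Fin.ext
    rw [Fin.val_add, v1, v2, show (1 + 1 : ℕ) = 2 from rfl]
    exact Nat.mod_eq_of_lt (by omega)
  have f3 : (2 : Fin n) + 1 = 3 := by
    apply Fin.ext
    rw [Fin.val_add, v1, v2, Fin.coe_ofNat_eq_mod, show (2 + 1 : ℕ) = 3 from rfl]
  have f10 : (1 : Fin n) ≠ 0 := fun h => by
    have := congrArg Fin.val h; rw [v1, Fin.val_zero] at this; omega
  have f20 : (2 : Fin n) ≠ 0 := fun h => by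
    have := congrArg Fin.val h; rw [v2, Fin.val_zero] at this; omega
  have f21 : (2 : Fin n) ≠ 1 := fun h => by
    have := congrArg Fin.val h; rw [v2, v1] at this; omega
  have mA : ∀ q : Fin n, mapA n q = q + 1 := fun _ => rfl
  have mC0 : mapC n 0 = 2 := if_pos rfl
  have mC1 : mapC n 1 = 2 := by
    show (if (1 : Fin n) = 0 then 2 else if (1 : Fin n) = 1 then 2 else 1 + 1) = 2
    rw [if_neg f10, if_pos rfl]
  have mCq : ∀ q : Fin n, q ≠ 0 → q ≠ 1 → mapC n q = q + 1 := fun q h0 h1 => by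
    show (if q = 0 then 2 else if q = 1 then 2 else q + 1) = q + 1
    rw [if_neg h0, if_neg h1]
  have mD0 : mapD n 0 = 1 := if_pos rfl
  have mD1 : mapD n 1 = 3 := by
    show (if (1 : Fin n) = 0 then 1 else if (1 : Fin n) = 1 then 3
      else if (1 : Fin n) = 2 then 3 else 1 + 1) = 3
    rw [if_neg f10, if_pos rfl]
  have mD2 : mapD n 2 = 3 := by
    show (if (2 : Fin n) = 0 then 1 else if (2 : Fin n) = 1 then 3
      else if (2 : Fin n) = 2 then 3 else 2 + 1) = 3
    rw [if_neg f20, if_neg f21, if_pos rfl]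
  have mDq : ∀ q : Fin n, q ≠ 0 → q ≠ 1 → q ≠ 2 → mapD n q = q + 1 :=
    fun q h0 h1 h2 => by
      show (if q = 0 then 1 else if q = 1 then 3 else if q = 2 then 3 else q + 1) = q + 1
      rw [if_neg h0, if_neg h1, if_neg h2]
  have mE0 : mapE n 0 = 2 := if_pos rfl
  have mE1 : mapE n 1 = 3 := by
    show (if (1 : Fin n) = 0 then 2 else if (1 : Fin n) = 1 then 3
      else if (1 : Fin n) = 2 then 3 else 1 + 1) = 3
    rw [if_neg f10, if_pos rfl]
  have mE2 : mapE n 2 = 3 := by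
    show (if (2 : Fin n) = 0 then 2 else if (2 : Fin n) = 1 then 3
      else if (2 : Fin n) = 2 then 3 else 2 + 1) = 3
    rw [if_neg f20, if_neg f21, if_pos rfl]
  have mEq : ∀ q : Fin n, q ≠ 0 → q ≠ 1 → q ≠ 2 → mapE n q = q + 1 :=
    fun q h0 h1 h2 => by
      show (if q = 0 then 2 else if q = 1 then 3 else if q = 2 then 3 else q + 1) = q + 1
      rw [if_neg h0, if_neg h1, if_neg h2]
  refine ⟨fun h0 => ⟨?_, ?_⟩, fun h1 => ⟨?_, ?_⟩, fun h0 h1 => ⟨⟨?_, ?_⟩, ?_⟩⟩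
  · refine Finset.image_congr fun q hq => ?_
    have hq0 : q ≠ 0 := fun h => h0 (h ▸ hq)
    by_cases hq1 : q = 1
    · subst hq1; rw [mA, mC1, f2]
    · rw [mA, mCq q hq0 hq1]
  · refine Finset.image_congr fun q hq => ?_
    have hq0 : q ≠ 0 := fun h => h0 (h ▸ hq)
    by_cases hq1 : q = 1
    · subst hq1; rw [mE1, mD1]
    · by_cases hq2 : q = 2
      · subst hq2; rw [mE2, mD2]
      · rw [mEq q hq0 hq1 hq2, mDq q hq0 hq1 hq2]
  · refine Finset.image_congr fun q hq => ?_
    have hq1 : q ≠ 1 := fun h => h1 (h ▸ hq)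
    by_cases hq0 : q = 0
    · subst hq0; rw [mA, mD0, f1]
    · by_cases hq2 : q = 2
      · subst hq2; rw [mA, mD2, f3]
      · rw [mA, mDq q hq0 hq1 hq2]
  · refine Finset.image_congr fun q hq => ?_
    have hq1 : q ≠ 1 := fun h => h1 (h ▸ hq)
    by_cases hq0 : q = 0
    · subst hq0; rw [mE0, mC0]
    · by_cases hq2 : q = 2
      · subst hq2; rw [mE2, mCq 2 hq0 hq1, f3]
      · rw [mEq q hq0 hq1 hq2, mCq q hq0 hq1]
  -- Sc ⊆ Sa
  · intro y hy
    simp only [Finset.mem_image] at hy ⊢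
    obtain ⟨q, hq, rfl⟩ := hy
    by_cases hq0 : q = 0
    · exact ⟨1, h1, by subst hq0; rw [mA, f2, mC0]⟩
    · by_cases hq1 : q = 1
      · exact ⟨1, h1, by subst hq1; rw [mA, f2, mC1]⟩
      · exact ⟨q, hq, by rw [mA, mCq q hq0 hq1]⟩
  -- ¬ Sa ⊆ Sc : 1 ∈ Sa \ Sc
  · intro hsub
    have h1mem : (1 : Fin n) ∈ S.image (mapA n) :=
      Finset.mem_image.2 ⟨0, h0, by rw [mA, f1]⟩
    have hmem := hsub h1mem
    simp only [Finset.mem_image] at hmem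
    obtain ⟨q, hq, hmap⟩ := hmem
    by_cases hq0 : q = 0
    · subst hq0; rw [mC0] at hmap; exact f21 hmap
    · by_cases hq1 : q = 1
      · subst hq1; rw [mC1] at hmap; exact f21 hmap
      · rw [mCq q hq0 hq1] at hmap
        exact hq0 (add_right_cancel (hmap.trans f1.symm))
  -- Sc ⊆ Se
  · intro y hy
    simp only [Finset.mem_image] at hy ⊢
    obtain ⟨q, hq, rfl⟩ := hy
    by_cases hq0 : q = 0
    · exact ⟨0, h0, by subst hq0; rw [mE0, mC0]⟩
    · by_cases hq1 : q = 1
      · exact ⟨0, h0, by subst hq1; rw [mE0, mC1]⟩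
      · by_cases hq2 : q = 2
        · exact ⟨2, hq2 ▸ hq, by subst hq2; rw [mE2, mCq 2 hq0 hq1, f3]⟩
        · exact ⟨q, hq, by rw [mEq q hq0 hq1 hq2, mCq q hq0 hq1]⟩
end

section
/- A basic synchronizing DFA on 3 states has shortest synchronizing word length at most 4; i.e., no super-critical DFA on three states exists. -/
/-- `w` is a synchronizing word for the DFA with transitions `δ`. -/
def IsSyncWordOf {Q Alph : Type*} (δ : Alph → Q → Q) (w : List Alph) : Prop :=
  ∃ qs : Q, ∀ q : Q, w.foldl (fun s x => δ x s) q = qs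

/-- The DFA is basic: distinct symbols act differently and no symbol is the identity. -/
def IsBasicOf {Q Alph : Type*} (δ : Alph → Q → Q) : Prop :=
  Function.Injective δ ∧ ∀ x : Alph, δ x ≠ id

section Aux

variable {Alph : Type*} (δ : Alph → Fin 3 → Fin 3)

/-- Running the DFA on word `w` from state `q`. -/
def runD (w : List Alph) (q : Fin 3) : Fin 3 :=
  w.foldl (fun s x => δ x s) q

/-- Image of the full state set under word `w`. -/
def TD (w : List Alph) : Finset (Fin 3) := Finset.univ.image (runD δ w)

lemma runD_append (u v : List Alph) (q : Fin 3) :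
    runD δ (u ++ v) q = runD δ v (runD δ u q) := by
  simp [runD, List.foldl_append]

lemma TD_append (u v : List Alph) :
    TD δ (u ++ v) = (TD δ u).image (runD δ v) := by
  ext a
  simp only [TD, Finset.mem_image, Finset.mem_univ, true_and]
  constructor
  · rintro ⟨q, hq⟩
    exact ⟨runD δ u q, ⟨q, rfl⟩, by rw [← runD_append]; exact hq⟩
  · rintro ⟨b, ⟨q, rfl⟩, hb⟩
    exact ⟨q, by rw [runD_append]; exact hb⟩

lemma sync_iff (w : List Alph) : IsSyncWordOf δ w ↔ (TD δ w).card = 1 := by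
  constructor
  · rintro ⟨qs, h⟩
    have : TD δ w = {qs} := by
      ext a
      simp only [TD, Finset.mem_image, Finset.mem_univ, true_and, Finset.mem_singleton]
      constructor
      · rintro ⟨q, rfl⟩; exact h q
      · rintro rfl; exact ⟨0, h 0⟩
    rw [this]; simp
  · intro h
    obtain ⟨a, ha⟩ := Finset.card_eq_one.mp h
    refine ⟨a, fun q => ?_⟩
    have : runD δ w q ∈ TD δ w := by
      simp [TD, Finset.mem_image]
    rw [ha, Finset.mem_singleton] at this
    exact this

lemma TD_nil : TD δ ([] : List Alph) = Finset.univ := by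
  ext a
  simp [TD, runD]

end Aux

/-- a basic synchronizing DFA on 3 states has a synchronizing word of
length at most 4 = (3-1)²; i.e., no super-critical DFA on three states exists. -/
theorem no_supercritical_three_states {Alph : Type*} (δ : Alph → Fin 3 → Fin 3)
    (hbasic : IsBasicOf δ) (hsync : ∃ w, IsSyncWordOf δ w) :
    ∃ w : List Alph, IsSyncWordOf δ w ∧ w.length ≤ 4 := by
  classical
  obtain ⟨w0, hw0⟩ := hsync
  have hex : ∃ n, ∃ w : List Alph, IsSyncWordOf δ w ∧ w.length = n :=
    ⟨w0.length, w0, hw0, rfl⟩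
  obtain ⟨w, hw, hwn⟩ := Nat.find_spec hex
  set n := Nat.find hex with hn
  by_cases hle : n ≤ 4
  · exact ⟨w, hw, hwn ▸ hle⟩
  push_neg at hle
  have h5 : 5 ≤ w.length := by omega
  exfalso
  -- the images of prefixes of the minimal word are pairwise distinct
  have key : ∀ i j : ℕ, i < j → j < w.length → TD δ (w.take i) ≠ TD δ (w.take j) := by
    intro i j hij hjl heq
    set w' : List Alph := w.take i ++ w.drop j with hw'
    have hsync' : IsSyncWordOf δ w' := by
      rw [sync_iff]
      have h1 : TD δ w' = (TD δ (w.take i)).image (runD δ (w.drop j)) := TD_append ..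
      have h2 : TD δ w = (TD δ (w.take j)).image (runD δ (w.drop j)) := by
        conv_lhs => rw [← List.take_append_drop j w]
        exact TD_append ..
      rw [h1, heq, ← h2]
      exact (sync_iff δ w).mp hw
    have hlen' : w'.length < n := by
      have : w'.length = min i w.length + (w.length - j) := by
        simp [hw', List.length_take, List.length_drop]
      omega
    exact Nat.find_min hex hlen' ⟨w', hsync', rfl⟩
  -- intermediate prefix images have exactly two elements
  have hcard2 : ∀ i : ℕ, 1 ≤ i → i < w.length → (TD δ (w.take i)).card = 2 := by
    intro i h1 h2
    have hne1 : (TD δ (w.take i)).card ≠ 1 := by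
      intro hc
      have hs : IsSyncWordOf δ (w.take i) := (sync_iff δ _).mpr hc
      have : (w.take i).length < n := by
        rw [List.length_take]; omega
      exact Nat.find_min hex this ⟨w.take i, hs, rfl⟩
    have hne3 : (TD δ (w.take i)).card ≠ 3 := by
      intro hc
      have huniv : TD δ (w.take i) = Finset.univ := by
        apply Finset.eq_univ_of_card
        simpa using hc
      have : TD δ (w.take 0) = TD δ (w.take i) := by
        simp [TD_nil, huniv]
      exact key 0 i (by omega) h2 this
    have hle3 : (TD δ (w.take i)).card ≤ 3 := by
      simpa using Finset.card_le_univ (TD δ (w.take i))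
    have hpos : 0 < (TD δ (w.take i)).card := by
      apply Finset.card_pos.mpr
      exact ⟨runD δ (w.take i) 0, by simp [TD]⟩
    omega
  -- pigeonhole: four distinct 2-element subsets of Fin 3, but there are only 3
  set P : Finset (Finset (Fin 3)) := Finset.univ.filter (fun S => S.card = 2) with hP
  have hPcard : P.card = 3 := by decide
  set f : Fin 4 → Finset (Fin 3) := fun i => TD δ (w.take ((i : ℕ) + 1)) with hf
  have hmaps : ∀ i ∈ (Finset.univ : Finset (Fin 4)), f i ∈ P := by
    intro i _
    simp only [hP, Finset.mem_filter, Finset.mem_univ, true_and]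
    exact hcard2 ((i : ℕ) + 1) (by omega) (by have := i.isLt; omega)
  have hinj : Set.InjOn f (Finset.univ : Finset (Fin 4)) := by
    intro i _ j _ heq
    by_contra hne
    rcases lt_trichotomy (i : ℕ) (j : ℕ) with h | h | h
    · exact key _ _ (by omega) (by have := j.isLt; omega) heq
    · exact hne (Fin.ext h)
    · exact key _ _ (by omega) (by have := i.isLt; omega) heq.symm
  have := Finset.card_le_card_of_injOn f hmaps hinj
  simp [hPcard] at this
end

section
/- Let n ≥ 1 and let c be a permutation of {1,...,n} satisfying qc ≤ q+1 for all q. Then there exist L ≥ 1 and loop lengths l_1,...,l_L ≥ 1 with l_1 + ... + l_L = n such that qc = q - l_i + 1 if q = l_1 + ... + l_i for some 1 ≤ i ≤ L, and qc = q + 1 otherwise. -/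
set_option maxHeartbeats 1000000


/-- if `c` is a permutation of `{1,...,n}` (here `Fin n`, state `i+1`
being index `i`) with `qc ≤ q+1` for all `q` (in 1-based values), then `{1,...,n}`
splits into `L ≥ 1` consecutive blocks of lengths `l_1, ..., l_L` summing to `n`,
such that `qc = q - l_i + 1` if `q = l_1 + ... + l_i` for some `i`, and `qc = q + 1`
otherwise. -/
theorem perm_loop_structure (n : ℕ) (hn : 1 ≤ n) (c : Equiv.Perm (Fin n))
    (hc : ∀ q : Fin n, ((c q : ℕ) + 1) ≤ (q : ℕ) + 2) :
    ∃ L : ℕ, 1 ≤ L ∧ ∃ l : ℕ → ℕ,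
      (∀ i, i < L → 1 ≤ l i) ∧ (∑ i ∈ Finset.range L, l i) = n ∧
      ∀ q : Fin n,
        (∀ i, i < L → (q : ℕ) + 1 = (∑ j ∈ Finset.range (i + 1), l j) →
          (c q : ℕ) + 1 = (q : ℕ) + 1 - l i + 1) ∧
        ((∀ i, i < L → (q : ℕ) + 1 ≠ (∑ j ∈ Finset.range (i + 1), l j)) →
          (c q : ℕ) + 1 = (q : ℕ) + 2) := by
  classical
  -- the set of "descents" (ends of blocks)
  set D : Finset (Fin n) := Finset.univ.filter (fun q => (c q : ℕ) ≤ (q : ℕ)) with hD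
  have hmemD : ∀ q : Fin n, q ∈ D ↔ (c q : ℕ) ≤ (q : ℕ) := by
    intro q; simp [hD]
  have hstep : ∀ q : Fin n, q ∉ D → (c q : ℕ) = (q : ℕ) + 1 := by
    intro q hq
    have h1 := hc q
    have h2 : ¬ (c q : ℕ) ≤ (q : ℕ) := fun h => hq ((hmemD q).2 h)
    omega
  have hlastD : (⟨n - 1, by omega⟩ : Fin n) ∈ D := by
    rw [hmemD]
    have := (c ⟨n - 1, by omega⟩).isLt
    simp only []
    omega
  -- invariance of initial segments ending at a descent
  have hinv : ∀ d : Fin n, d ∈ D → ∀ x : Fin n, (x : ℕ) ≤ (d : ℕ) → (c x : ℕ) ≤ (d : ℕ) := by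
    intro d hd x hx
    by_cases hxD : x ∈ D
    · exact le_trans ((hmemD x).1 hxD) hx
    · have hs := hstep x hxD
      rcases lt_or_eq_of_le hx with h | h
      · omega
      · exact absurd (Fin.ext h ▸ hd) hxD
  -- surjectivity onto initial segments
  have hsurj : ∀ d : Fin n, d ∈ D → ∀ v : Fin n, (v : ℕ) ≤ (d : ℕ) →
      ∃ x : Fin n, (x : ℕ) ≤ (d : ℕ) ∧ c x = v := by
    intro d hd v hv
    set A : Finset (Fin n) := Finset.univ.filter (fun x => (x : ℕ) ≤ (d : ℕ)) with hA
    have hsub : A.image c ⊆ A := by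
      intro y hy
      simp only [hA, Finset.mem_image, Finset.mem_filter, Finset.mem_univ, true_and] at hy ⊢
      obtain ⟨x, hx, rfl⟩ := hy
      exact hinv d hd x hx
    have hcard : (A.image c).card = A.card := Finset.card_image_of_injective A c.injective
    have heq : A.image c = A := Finset.eq_of_subset_of_card_le hsub (le_of_eq hcard.symm)
    have hvA : v ∈ A := by rw [hA]; exact Finset.mem_filter.mpr ⟨Finset.mem_univ v, hv⟩
    rw [← heq] at hvA
    simp only [Finset.mem_image, hA, Finset.mem_filter, Finset.mem_univ, true_and] at hvA
    obtain ⟨x, hx1, hx2⟩ := hvA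
    exact ⟨x, hx1, hx2⟩
  have hDne : D.Nonempty := ⟨_, hlastD⟩
  obtain ⟨L, hLcard⟩ : ∃ L, D.card = L := ⟨D.card, rfl⟩
  have hL : 1 ≤ L := hLcard ▸ Finset.card_pos.mpr hDne
  obtain ⟨d, hdmem, hdmono, hdsurj⟩ :
      ∃ d : Fin L → Fin n, (∀ i : Fin L, d i ∈ D) ∧ StrictMono d ∧
        (∀ q : Fin n, q ∈ D → ∃ i : Fin L, d i = q) := by
    refine ⟨D.orderEmbOfFin hLcard, fun i => D.orderEmbOfFin_mem hLcard i,
      OrderEmbedding.strictMono _, fun q hq => ?_⟩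
    have : q ∈ Set.range (D.orderEmbOfFin hLcard : Fin L → Fin n) := by
      rw [D.range_orderEmbOfFin hLcard]; exact hq
    exact this
  -- the largest descent is n-1
  have hmax : (d ⟨L - 1, by omega⟩ : ℕ) = n - 1 := by
    obtain ⟨i, hi⟩ := hdsurj _ hlastD
    have h1 : (d i : ℕ) = n - 1 := by rw [hi]
    have h2 : (d i : ℕ) ≤ (d ⟨L - 1, by omega⟩ : ℕ) := by
      apply hdmono.monotone
      apply Fin.le_def.mpr
      have := i.isLt
      simp
      omega
    have h3 := (d ⟨L - 1, by omega⟩).isLt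
    omega
  -- value of c at the first descent
  have hval0 : ∀ h0 : 0 < L, (c (d ⟨0, h0⟩) : ℕ) = 0 := by
    intro h0
    obtain ⟨x, hx1, hx2⟩ := hsurj (d ⟨0, h0⟩) (hdmem _) ⟨0, by omega⟩ (Nat.zero_le _)
    have hxv : (c x : ℕ) = 0 := by rw [hx2]
    by_cases hxD : x ∈ D
    · obtain ⟨j, hj⟩ := hdsurj x hxD
      have h0j : (d ⟨0, h0⟩ : ℕ) ≤ (d j : ℕ) :=
        Fin.le_def.mp (hdmono.monotone (Fin.le_def.mpr (Nat.zero_le _)))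
      have hjx : (d j : ℕ) = (x : ℕ) := congrArg Fin.val hj
      have hxd : x = d ⟨0, h0⟩ := Fin.ext (by omega)
      rw [← hxd]
      exact hxv
    · have := hstep x hxD
      omega
  -- value of c at subsequent descents
  have hvalS : ∀ i : ℕ, ∀ h : i + 1 < L,
      (c (d ⟨i + 1, h⟩) : ℕ) = (d ⟨i, by omega⟩ : ℕ) + 1 := by
    intro i h
    set p := d ⟨i, by omega⟩ with hp
    set d1 := d ⟨i + 1, h⟩ with hd1
    have hpd : (p : ℕ) < (d1 : ℕ) := hdmono (by exact Fin.mk_lt_mk.mpr (by omega))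
    have hsn : (p : ℕ) + 1 < n := lt_of_le_of_lt hpd d1.isLt
    obtain ⟨x, hx1, hx2⟩ := hsurj d1 (hdmem _) ⟨(p : ℕ) + 1, hsn⟩ (by simpa using hpd)
    have hxv : (c x : ℕ) = (p : ℕ) + 1 := by rw [hx2]
    by_cases hxD : x ∈ D
    · obtain ⟨j, hj⟩ := hdsurj x hxD
      have hji : j = ⟨i + 1, h⟩ := by
        by_contra hne
        have hjle : j ≤ ⟨i + 1, h⟩ := by
          by_contra hgt
          have := hdmono (not_le.mp hgt)
          rw [hj] at this
          exact absurd hx1 (not_le.mpr this)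
        have hjlt : j ≤ ⟨i, by omega⟩ := by
          rcases lt_or_eq_of_le hjle with hlt | heq
          · exact Fin.le_def.mpr (by simp; have := Fin.mk_lt_mk.mp hlt; omega)
          · exact absurd heq hne
        have h1 : (c x : ℕ) ≤ (x : ℕ) := (hmemD x).1 hxD
        have h2 : (x : ℕ) ≤ (p : ℕ) := by
          have := hdmono.monotone hjlt
          rw [hj] at this
          exact this
        omega
      rw [hji] at hj
      rw [← hj, ← hd1] at hxv
      exact hxv
    · have := hstep x hxD
      have hxp : (x : ℕ) = (p : ℕ) := by omega
      have : x = p := Fin.ext hxp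
      rw [this] at hxD
      exact absurd (hdmem ⟨i, by omega⟩) hxD
  -- numeric version of d, extended
  set dv : ℕ → ℕ := fun i => if h : i < L then (d ⟨i, h⟩ : ℕ) else n - 1 with hdv
  have hdvlt : ∀ i, ∀ h : i < L, dv i = (d ⟨i, h⟩ : ℕ) := by
    intro i h; simp [hdv, h]
  have hdvmono : ∀ i j, i < j → j < L → dv i < dv j := by
    intro i j hij hj
    rw [hdvlt i (by omega), hdvlt j hj]
    exact hdmono (Fin.mk_lt_mk.mpr hij)
  -- block lengths
  set l : ℕ → ℕ := fun i => if i = 0 then dv 0 + 1 else dv i - dv (i - 1) with hl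
  have hsum : ∀ i, i < L → ∑ j ∈ Finset.range (i + 1), l j = dv i + 1 := by
    intro i
    induction i with
    | zero => intro _; simp [hl]
    | succ k ih =>
      intro hk
      rw [Finset.sum_range_succ, ih (by omega)]
      have hmono := hdvmono k (k + 1) (by omega) hk
      simp only [hl, Nat.add_sub_cancel]
      rw [if_neg (by omega)]
      omega
  refine ⟨L, hL, l, ?_, ?_, ?_⟩
  · intro i hi
    rcases Nat.eq_zero_or_pos i with rfl | hpos
    · simp [hl]
    · have := hdvmono (i - 1) i (by omega) hi
      simp only [hl]
      rw [if_neg (by omega)]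
      omega
  · have : L = (L - 1) + 1 := by omega
    rw [this, hsum (L - 1) (by omega), hdvlt (L - 1) (by omega), hmax]
    omega
  · intro q
    constructor
    · intro i hi hq
      rw [hsum i hi] at hq
      have hqd : (q : ℕ) = dv i := by omega
      have hqd' : q = d ⟨i, hi⟩ := Fin.ext (by rw [hqd, hdvlt i hi])
      rcases Nat.eq_zero_or_pos i with rfl | hpos
      · rw [hqd']
        rw [hval0]
        simp only [hl, if_pos rfl]
        omega
      · have hi' : (i - 1) + 1 = i := by omega
        have hv : (c q : ℕ) = dv (i - 1) + 1 := by
          rw [hqd']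
          have h2 := hvalS (i - 1) (by omega)
          have h3 : (⟨i - 1 + 1, by omega⟩ : Fin L) = ⟨i, hi⟩ := Fin.ext hi'
          rw [h3] at h2
          rw [h2, ← hdvlt (i - 1) (by omega)]
        have hmono := hdvmono (i - 1) i (by omega) hi
        rw [hv]
        simp only [hl]
        rw [if_neg (by omega)]
        omega
    · intro hq
      have hqD : q ∉ D := by
        intro hqD
        obtain ⟨j, hj⟩ := hdsurj q hqD
        refine hq (j : ℕ) j.isLt ?_
        rw [hsum (j : ℕ) j.isLt, hdvlt (j : ℕ) j.isLt]
        rw [← hj]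
      have := hstep q hqD
      omega
end

section
/- Let n ≥ 2 and let c : {1,...,n} → {1,...,n} satisfy: the image of {1,...,n} under c is {2,...,n}, c maps {2,...,n} bijectively onto {2,...,n}, and qc ≤ q+1 for all q. Then there exist L ≥ 1 and loop lengths l_1,...,l_L ≥ 1 with l_1+...+l_L = n-1 such that qc = q - l_i + 1 if q = l_1+...+l_i+1 for some 1 ≤ i ≤ L, and qc = q+1 otherwise. -/
/-! Call `q` a loop end when `c q ≤ q`; every other state is sent to `q + 1`.
If `p` is a loop end, `c` maps the states `1, …, p` into themselves, hence onto themselves by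
injectivity, so no state beyond `p` is sent to one of them. Hence if `p < q` are consecutive
loop ends (or `p = 0` and `q` is the first one), then `p < c q`; and `c q ≤ p + 1`, since
otherwise `c q - 1` lies strictly between `p` and `q`, is not a loop end, and has the same image
as `q`. So `c q = p + 1`: the loop lengths are the gaps between consecutive loop ends, the last
of which is `n - 1`. -/

open Finset

theorem Finset.exists_partialSums_eq_of_zero_notMem (T : Finset ℕ) (h0 : 0 ∉ T) :
    ∃ l : ℕ → ℕ, (∀ i < #T, 1 ≤ l i) ∧
      (∀ m, m ∈ T ↔ ∃ i < #T, m = ∑ j ∈ range (i + 1), l j) ∧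
      (∀ i, ∀ m ∈ T, m ≤ ∑ j ∈ range i, l j ∨ ∑ j ∈ range (i + 1), l j ≤ m) ∧
      ∀ m ∈ T, m ≤ ∑ j ∈ range #T, l j := by
  classical
  have hfin : (Set.ofPred (· ∈ insert 0 T)).Finite := (insert 0 T).finite_toSet
  have hcard : #hfin.toFinset = #T + 1 := by
    rw [← card_insert_of_notMem h0]; congr 1; ext; simp
  -- `P` lists `insert 0 T` increasingly; `l` will be its sequence of differences.
  set P := Nat.nth (· ∈ insert 0 T)
  have hP0 : P 0 = 0 := Nat.nth_zero_of_zero (mem_insert_self 0 T)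
  have hPlt {i j : ℕ} (hij : i < j) (hj : j ≤ #T) : P i < P j :=
    Nat.nth_lt_nth_of_lt_card hfin hij (by omega)
  have hsum : ∀ k ≤ #T, ∑ j ∈ range k, (P (j + 1) - P j) = P k := by
    intro k hk
    induction k with
    | zero => simp [hP0]
    | succ k ih =>
      rw [sum_range_succ, ih (by omega)]
      have := hPlt (Nat.lt_add_one k) hk
      omega
  have hmem : ∀ m, m ∈ T ↔ ∃ i < #T, m = ∑ j ∈ range (i + 1), (P (j + 1) - P j) := by
    refine fun m => ⟨fun hm => ?_, ?_⟩
    · obtain ⟨k, hk, rfl⟩ := Nat.exists_lt_card_finite_nth_eq hfin (mem_insert_of_mem hm)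
      obtain ⟨i, rfl⟩ : ∃ i, k = i + 1 :=
        Nat.exists_eq_succ_of_ne_zero fun h => h0 (hP0 ▸ h ▸ hm)
      exact ⟨i, by omega, (hsum (i + 1) (by omega)).symm⟩
    · rintro ⟨i, hi, rfl⟩
      rw [hsum (i + 1) hi]
      have hP : P (i + 1) ∈ insert 0 T := Nat.nth_mem_of_lt_card hfin (by omega)
      exact (mem_insert.1 hP).resolve_left (hP0 ▸ (hPlt i.succ_pos hi).ne')
  have hmono : Monotone fun k => ∑ j ∈ range k, (P (j + 1) - P j) :=
    fun _ _ h => sum_le_sum_of_subset (range_mono h)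
  refine ⟨fun i => P (i + 1) - P i, fun i hi => ?_, hmem, fun i m hm => ?_, fun m hm => ?_⟩
  · have := hPlt (Nat.lt_add_one i) hi
    simp only
    omega
  · obtain ⟨k, -, rfl⟩ := (hmem m).1 hm
    rcases le_or_gt (k + 1) i with h | h
    · exact .inl (hmono h)
    · exact .inr (hmono h)
  · obtain ⟨k, hk, rfl⟩ := (hmem m).1 hm
    exact hmono hk

section LoopEnds

variable {n : ℕ} (c : Fin n → Fin n)

def loopEnds : Finset ℕ := (univ.filter fun q : Fin n => c q ≤ q).map Fin.valEmbedding

variable {c}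

theorem mem_loopEnds (q : Fin n) : (q : ℕ) ∈ loopEnds c ↔ c q ≤ q := by
  simp [loopEnds, Fin.val_inj]

theorem lt_of_mem_loopEnds {m : ℕ} (hm : m ∈ loopEnds c) : m < n := by
  simp only [loopEnds, mem_map, Fin.valEmbedding_apply] at hm
  obtain ⟨q, -, rfl⟩ := hm
  exact q.isLt

theorem sub_one_mem_loopEnds [NeZero n] : n - 1 ∈ loopEnds c := by
  have hn := NeZero.pos n
  refine (mem_loopEnds ⟨n - 1, by omega⟩).2 (Fin.le_def.2 ?_)
  have := (c ⟨n - 1, by omega⟩).isLt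
  simp only
  omega

theorem zero_notMem_loopEnds [NeZero n] (hc0 : ∀ q, c q ≠ 0) : 0 ∉ loopEnds c :=
  fun h => hc0 0 (le_antisymm ((mem_loopEnds 0).1 h) (Fin.zero_le _))

end LoopEnds

theorem lt_apply_of_apply_le {n : ℕ} [NeZero n] {c : Fin n → Fin n} (hc0 : ∀ q, c q ≠ 0)
    (hinj : Set.InjOn c {q | q ≠ 0}) (hle : ∀ q, (c q : ℕ) ≤ q + 1) {p r : Fin n}
    (hp : c p ≤ p) (hpr : p < r) : p < c r := by
  have hmaps : Set.MapsTo c (Set.Ioc 0 p) (Set.Ioc 0 p) := by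
    rintro t ⟨-, htp⟩
    refine ⟨(Fin.pos_iff_ne_zero' _).2 (hc0 t), ?_⟩
    rcases htp.lt_or_eq with htp | rfl
    · have := hle t
      rw [Fin.lt_def] at htp
      rw [Fin.le_def]
      omega
    · exact hp
  have hsurj : Set.SurjOn c (Set.Ioc 0 p) (Set.Ioc 0 p) :=
    ((Set.toFinite _).injOn_iff_bijOn_of_mapsTo hmaps |>.1
      (hinj.mono fun t ht => ht.1.ne')).surjOn
  by_contra! hrp
  obtain ⟨t, ⟨ht0, htp⟩, hct⟩ := hsurj ⟨(Fin.pos_iff_ne_zero' _).2 (hc0 r), hrp⟩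
  have : t = r := hinj ht0.ne' (p.zero_le.trans_lt hpr).ne' hct
  exact (this ▸ htp).not_gt hpr

theorem val_apply_eq_succ_of_consecutive {n : ℕ} [NeZero n] {c : Fin n → Fin n}
    (hc0 : ∀ q, c q ≠ 0) (hinj : Set.InjOn c {q | q ≠ 0}) (hle : ∀ q, (c q : ℕ) ≤ q + 1)
    {p q : Fin n} (hp : p = 0 ∨ c p ≤ p) (hq : c q ≤ q) (hpq : p < q)
    (hgap : ∀ r, p < r → r < q → ¬ c r ≤ r) : (c q : ℕ) = p + 1 := by
  have hlow : p < c q := hp.elim (fun h => h ▸ (Fin.pos_iff_ne_zero' _).2 (hc0 q))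
    (lt_apply_of_apply_le hc0 hinj hle · hpq)
  rw [Fin.lt_def] at hlow
  rw [Fin.le_def] at hq
  by_contra hne
  set r : Fin n := ⟨c q - 1, by omega⟩
  have hpr : p < r := by rw [Fin.lt_def]; simp only [r]; omega
  have hrq : r < q := by rw [Fin.lt_def]; simp only [r]; omega
  have hcr : c r = c q := by
    have := hgap r hpr hrq
    have := hle r
    rw [Fin.le_def] at *
    ext; simp only [r] at *; omega
  exact hrq.ne (hinj (p.zero_le.trans_lt hpr).ne' (p.zero_le.trans_lt hpq).ne' hcr)

theorem deficiency_one_loop_structure_general (n : ℕ) [NeZero n]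
    (c : Fin n → Fin n)
    (himg : Finset.univ.image c = Finset.univ \ {0})
    (hbij : Set.BijOn c {q : Fin n | q ≠ 0} {q : Fin n | q ≠ 0})
    (hle : ∀ q : Fin n, (c q : ℕ) ≤ (q : ℕ) + 1) :
    ∃ L : ℕ, 1 ≤ L ∧ ∃ l : ℕ → ℕ,
      (∀ i, i < L → 1 ≤ l i) ∧ (∑ i ∈ Finset.range L, l i) = n - 1 ∧
      ∀ q : Fin n,
        (∀ i, i < L → (q : ℕ) = (∑ j ∈ Finset.range (i + 1), l j) →
          (c q : ℕ) = (q : ℕ) + 1 - l i) ∧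
        ((∀ i, i < L → (q : ℕ) ≠ (∑ j ∈ Finset.range (i + 1), l j)) →
          (c q : ℕ) = (q : ℕ) + 1) := by
  have hc0 (q : Fin n) : c q ≠ 0 := by
    simpa [himg] using mem_image_of_mem c (mem_univ q)
  obtain ⟨l, hl, hmem, hgap, hmax⟩ :=
    (loopEnds c).exists_partialSums_eq_of_zero_notMem (zero_notMem_loopEnds hc0)
  have hL : 0 < #(loopEnds c) := card_pos.2 ⟨_, sub_one_mem_loopEnds⟩
  refine ⟨_, hL, l, hl, ?_, fun q => ⟨fun i hi hq => ?_, fun hq => ?_⟩⟩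
  · have := lt_of_mem_loopEnds
      ((hmem _).2 ⟨_, Nat.sub_one_lt hL.ne', by rw [Nat.sub_add_cancel hL]⟩)
    have := hmax _ sub_one_mem_loopEnds
    omega
  · have hpq : ∑ j ∈ range i, l j < q := by rw [hq, sum_range_succ]; have := hl i hi; omega
    have hcq := val_apply_eq_succ_of_consecutive hc0 hbij.injOn hle (p := ⟨_, hpq.trans q.isLt⟩)
      ?_ ((mem_loopEnds q).1 ((hmem q).2 ⟨i, hi, hq⟩)) hpq fun r hpr hrq hr => ?_
    · have := sum_range_succ l i
      simp only at hcq
      omega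
    · rcases i with _ | k
      · exact .inl (Fin.ext (sum_range_zero l))
      · exact .inr ((mem_loopEnds _).1 ((hmem _).2 ⟨k, by omega, rfl⟩))
    · rw [Fin.lt_def] at hpr hrq
      rcases hgap i r ((mem_loopEnds r).2 hr) with h | h <;> simp only at hpr <;> omega
  · have hqT : (q : ℕ) ∉ loopEnds c := fun h => by
      obtain ⟨i, hi, hqi⟩ := (hmem _).1 h
      exact hq i hi hqi
    have := hle q
    rw [mem_loopEnds, Fin.le_def] at hqT
    omega

/-- let n ≥ 2 and let `c` on `Fin n` (state `i+1` is index `i`) satisfy: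
the image of the full state set is `{2,...,n}`, `c` maps `{2,...,n}` bijectively onto
itself, and `qc ≤ q+1` (1-based) for all `q`.  Then there exist `L ≥ 1` loop lengths
`l_0, ..., l_{L-1} ≥ 1` summing to `n-1` such that (1-based) `qc = q - l_i + 1` if
`q = l_0 + ... + l_i + 1` for some `i < L`, and `qc = q + 1` otherwise. -/
theorem deficiency_one_loop_structure (n : ℕ) (hn : 2 ≤ n) [NeZero n]
    (c : Fin n → Fin n)
    (himg : Finset.univ.image c = Finset.univ \ {0})
    (hbij : Set.BijOn c {q : Fin n | q ≠ 0} {q : Fin n | q ≠ 0})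
    (hle : ∀ q : Fin n, (c q : ℕ) ≤ (q : ℕ) + 1) :
    ∃ L : ℕ, 1 ≤ L ∧ ∃ l : ℕ → ℕ,
      (∀ i, i < L → 1 ≤ l i) ∧ (∑ i ∈ Finset.range L, l i) = n - 1 ∧
      ∀ q : Fin n,
        (∀ i, i < L → (q : ℕ) = (∑ j ∈ Finset.range (i + 1), l j) →
          (c q : ℕ) = (q : ℕ) + 1 - l i) ∧
        ((∀ i, i < L → (q : ℕ) ≠ (∑ j ∈ Finset.range (i + 1), l j)) →
          (c q : ℕ) = (q : ℕ) + 1) :=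
  deficiency_one_loop_structure_general n c himg hbij hle
end

section
/- Let n ≥ 5, suppose 2c = 2, and let c satisfy the deficiency-1 block structure with Qc = Q\{1} and c a permutation of Q\{1} with qc ≤ q+1 for all q. Define the permutation c̃ of Q by 1c̃ = 1 and qc̃ = qc for q ≠ 1. Then for every subset S ⊆ Q: if 1 ∉ S or 2 ∈ S, then S c^k ⊆ S c̃^k for all k ≥ 1. -/
/-- let n ≥ 5 and let `c` on `Fin n` (state `i+1` is index `i`) satisfy
`1c = 2`, `2c = 2`, `Qc = Q \ {1}`, `c` a bijection of `Q \ {1}`, and `qc ≤ q+1`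
(1-based) for all `q`.  Let `c̃` be the permutation agreeing with `c` except
`1c̃ = 1`.  Then for every subset `S` of states with `1 ∉ S` or `2 ∈ S`, we have
`S c^k ⊆ S c̃^k` for all `k ≥ 1`. -/
theorem tilde_domination (n : ℕ) (hn : 5 ≤ n) [NeZero n]
    (c : Fin n → Fin n)
    (h1 : c 0 = 1) (h2 : c 1 = 1)
    (himg : Finset.univ.image c = Finset.univ \ {0})
    (hbij : Set.BijOn c {q : Fin n | q ≠ 0} {q : Fin n | q ≠ 0})
    (hle : ∀ q : Fin n, (c q : ℕ) ≤ (q : ℕ) + 1) :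
    let ct : Fin n → Fin n := fun q => if q = 0 then 0 else c q
    ∀ S : Finset (Fin n), ((0 : Fin n) ∉ S ∨ (1 : Fin n) ∈ S) →
      ∀ k : ℕ, 1 ≤ k → S.image (c^[k]) ⊆ S.image (ct^[k]) := by
  intro ct S hS k hk
  have h10 : (1 : Fin n) ≠ 0 := by
    simp [Fin.ext_iff, Fin.val_one', Nat.mod_eq_of_lt (by omega : 1 < n)]
  have hne : ∀ q : Fin n, c q ≠ 0 := by
    intro q
    have : c q ∈ Finset.univ.image c := Finset.mem_image_of_mem c (Finset.mem_univ q)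
    rw [himg] at this
    simpa using this
  -- iterates agree away from 0
  have key : ∀ m : ℕ, ∀ q : Fin n, q ≠ 0 → ct^[m] q = c^[m] q := by
    intro m
    induction m with
    | zero => intro q _; rfl
    | succ m ih =>
      intro q hq
      rw [Function.iterate_succ_apply, Function.iterate_succ_apply]
      have : ct q = c q := by simp [ct, hq]
      rw [this]
      exact ih _ (hne q)
  have hc1 : ∀ m : ℕ, c^[m] 1 = 1 := by
    intro m
    induction m with
    | zero => rfl
    | succ m ih => rw [Function.iterate_succ_apply, h2, ih]
  have hc0 : c^[k] 0 = 1 := by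
    obtain ⟨m, rfl⟩ := Nat.exists_eq_add_of_le hk
    rw [Nat.add_comm, Function.iterate_succ_apply, h1, hc1]
  have hct1 : ct^[k] 1 = 1 := by rw [key k 1 h10, hc1]
  intro x hx
  rw [Finset.mem_image] at hx ⊢
  obtain ⟨q, hq, rfl⟩ := hx
  by_cases hq0 : q = 0
  · subst hq0
    rw [hc0]
    rcases hS with h0 | h1'
    · exact absurd hq h0
    · exact ⟨1, h1', hct1⟩
  · exact ⟨q, hq, key k q hq0⟩
end
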